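/- arXiv:2311.05208 — 8 statements merged into one kernel-verified Lean document; each statement's English description precedes it below -/
import Mathlib

section
/- If a finite positive Borel measure μ on the unit sphere S_{N-1} linearly majorizes a finite positive Borel measure ν on S_{N-1}, then for every sublinear function p : ℝ^N → ℝ one has ∫_{S_{N-1}} p dμ ≥ ∫_{S_{N-1}} p dν. -/
/-!
A sublinear `p` is convex, hence continuous, and by Hahn–Banach every point `c` carries a linear
`ℓ ≤ p` with `ℓ c = p c`; near `c` such an `ℓ` is within `p (y - c) + p (c - y)` of `p`, which is
small. Cut the sphere into small Borel pieces `U k` with such functionals `ℓ k`, so that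
`p ≤ ℓ k + ε` on `U k`. Splitting `μ = ∑ μ k` along this partition,
`∫ p dν ≤ ∑ ∫_{U k} ℓ k dν + ε ν(S) = ∑ ∫ ℓ k dμ k + ε ν(S) ≤ ∫ p dμ + ε ν(S)`.
-/

open MeasureTheory

/-- A finite positive Borel measure `μ` on the unit sphere `S_{N-1}` linearly majorizes `ν`
if for every decomposition of the sphere into finitely many pairwise disjoint Borel sets
`U 1, …, U m` there are finite positive measures `μs 1, …, μs m` summing to `μ` such that
for each `k` and every linear functional `ℓ` on `ℝ^N`,
`∫ ℓ dμs k = ∫_{U k} ℓ dν`. -/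
def LinearlyMajorizes (N : ℕ)
    (μ ν : Measure (Metric.sphere (0 : EuclideanSpace ℝ (Fin N)) 1)) : Prop :=
  ∀ (m : ℕ) (U : Fin m → Set (Metric.sphere (0 : EuclideanSpace ℝ (Fin N)) 1)),
    (∀ k, MeasurableSet (U k)) →
    (Pairwise fun i j => Disjoint (U i) (U j)) →
    (⋃ k, U k) = Set.univ →
    ∃ μs : Fin m → Measure (Metric.sphere (0 : EuclideanSpace ℝ (Fin N)) 1),
      (∀ k, IsFiniteMeasure (μs k)) ∧ μ = ∑ k, μs k ∧
      ∀ (k : Fin m) (ℓ : EuclideanSpace ℝ (Fin N) →ₗ[ℝ] ℝ),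
        ∫ x, ℓ (x : EuclideanSpace ℝ (Fin N)) ∂(μs k)
          = ∫ x in U k, ℓ (x : EuclideanSpace ℝ (Fin N)) ∂ν

/-- `p : ℝ^N → ℝ` is sublinear: positively homogeneous and subadditive. -/
def Sublinear (N : ℕ) (p : EuclideanSpace ℝ (Fin N) → ℝ) : Prop :=
  (∀ t : ℝ, 0 ≤ t → ∀ x, p (t • x) = t * p x) ∧
  (∀ x y, p (x + y) ≤ p x + p y)

open Metric Filter Topology

def IsMeasurablePartition {α : Type*} [MeasurableSpace α] {m : ℕ} (U : Fin m → Set α) : Prop :=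
  (∀ k, MeasurableSet (U k)) ∧ Pairwise (fun i j => Disjoint (U i) (U j)) ∧ ⋃ k, U k = Set.univ

theorem exists_isMeasurablePartition_subset_ball {α : Type*} [PseudoMetricSpace α]
    [CompactSpace α] [MeasurableSpace α] [OpensMeasurableSpace α] {δ : ℝ} (hδ : 0 < δ) :
    ∃ (m : ℕ) (c : Fin m → α) (U : Fin m → Set α),
      IsMeasurablePartition U ∧ ∀ k, U k ⊆ ball (c k) δ := by
  obtain ⟨t, ht⟩ := isCompact_univ.elim_finite_subcover (fun x : α => ball x δ)
    (fun _ => isOpen_ball) (fun x _ => Set.mem_iUnion.2 ⟨x, mem_ball_self hδ⟩)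
  let c : Fin t.card → α := fun k => t.equivFin.symm k
  have hcover : ⋃ k, ball (c k) δ = Set.univ := by
    refine Set.eq_univ_of_forall fun x => ?_
    obtain ⟨y, hy, hxy⟩ := Set.mem_iUnion₂.1 (ht (Set.mem_univ x))
    exact Set.mem_iUnion.2 ⟨t.equivFin ⟨y, hy⟩, by simpa [c] using hxy⟩
  refine ⟨t.card, c, disjointed fun k => ball (c k) δ,
    ⟨fun _ => disjointedRec (fun _ _ ht => ht.diff measurableSet_ball) measurableSet_ball,
      disjoint_disjointed _, ?_⟩, disjointed_subset _⟩
  rw [iUnion_disjointed, hcover]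

namespace Sublinear

variable {N : ℕ} {p : EuclideanSpace ℝ (Fin N) → ℝ}

theorem map_zero (hp : Sublinear N p) : p 0 = 0 := by
  simpa using hp.1 0 le_rfl 0

theorem convexOn (hp : Sublinear N p) : ConvexOn ℝ Set.univ p := by
  refine ⟨convex_univ, fun x _ y _ a b ha hb _ => ?_⟩
  rw [smul_eq_mul, smul_eq_mul, ← hp.1 a ha, ← hp.1 b hb]
  exact hp.2 _ _

theorem continuous (hp : Sublinear N p) : Continuous p :=
  hp.convexOn.locallyLipschitz.continuous

theorem exists_linearMap_le_eq (hp : Sublinear N p) {x : EuclideanSpace ℝ (Fin N)}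
    (hx : x ≠ 0) : ∃ ℓ : EuclideanSpace ℝ (Fin N) →ₗ[ℝ] ℝ, (∀ z, ℓ z ≤ p z) ∧ ℓ x = p x := by
  let f := LinearPMap.mkSpanSingleton (K := ℝ) (σ := RingHom.id ℝ) x (p x) hx
  have hfp : ∀ y : f.domain, f y ≤ p y := by
    rintro ⟨y, hy⟩
    obtain ⟨a, rfl⟩ := Submodule.mem_span_singleton.1 hy
    rw [LinearPMap.mkSpanSingleton'_apply x (p x) _ a hy]
    change a * p x ≤ p (a • x)
    rcases le_or_gt 0 a with ha | ha
    · exact (hp.1 a ha x).ge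
    · have hsum := hp.2 (a • x) (-(a • x))
      rw [add_neg_cancel, hp.map_zero, ← neg_smul, hp.1 (-a) (by linarith)] at hsum
      linarith
  obtain ⟨ℓ, hℓf, hℓp⟩ := exists_extension_of_le_sublinear f p
    (fun c hc y => hp.1 c hc.le y) hp.2 hfp
  refine ⟨ℓ, hℓp, ?_⟩
  rw [hℓf ⟨x, Submodule.mem_span_singleton_self x⟩, LinearPMap.mkSpanSingleton_apply]

theorem le_linearMap_add (hp : Sublinear N p) {ℓ : EuclideanSpace ℝ (Fin N) →ₗ[ℝ] ℝ}
    (hℓ : ∀ z, ℓ z ≤ p z) {c : EuclideanSpace ℝ (Fin N)} (hc : ℓ c = p c)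
    (y : EuclideanSpace ℝ (Fin N)) : p y ≤ ℓ y + (p (y - c) + p (c - y)) := by
  have h₁ : p y ≤ p c + p (y - c) := by simpa using hp.2 c (y - c)
  have h₂ : ℓ c - ℓ y ≤ p (c - y) := by simpa using hℓ (c - y)
  linarith

theorem exists_partition_sphere_linearMap_approx (hp : Sublinear N p) {ε : ℝ} (hε : 0 < ε) :
    ∃ (m : ℕ) (U : Fin m → Set (sphere (0 : EuclideanSpace ℝ (Fin N)) 1))
      (ℓ : Fin m → EuclideanSpace ℝ (Fin N) →ₗ[ℝ] ℝ), IsMeasurablePartition U ∧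
      (∀ k z, ℓ k z ≤ p z) ∧ ∀ k, ∀ x ∈ U k, p x ≤ ℓ k x + ε := by
  have hsmall : ∀ᶠ z in 𝓝 0, p z < ε / 2 :=
    (hp.continuous.tendsto 0).eventually (gt_mem_nhds (by rw [hp.map_zero]; positivity))
  obtain ⟨δ, hδ, hδp⟩ := eventually_nhds_iff_ball.1 hsmall
  obtain ⟨m, c, U, hU, hUc⟩ := exists_isMeasurablePartition_subset_ball
    (α := sphere (0 : EuclideanSpace ℝ (Fin N)) 1) hδ
  choose ℓ hℓp hℓc using fun k => hp.exists_linearMap_le_eq (ne_zero_of_mem_unit_sphere (c k))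
  refine ⟨m, U, ℓ, hU, hℓp, fun k x hx => ?_⟩
  have hxc : dist (x : EuclideanSpace ℝ (Fin N)) (c k) < δ := hUc k hx
  have h₁ := hδp _ (mem_ball_zero_iff.2 (by rwa [← dist_eq_norm]))
  have h₂ := hδp _ (mem_ball_zero_iff.2 (by rwa [← dist_eq_norm']))
  linarith [hp.le_linearMap_add (hℓp k) (hℓc k) x]

end Sublinear

theorem LinearlyMajorizes.integral_le_add {N : ℕ}
    {μ ν : Measure (sphere (0 : EuclideanSpace ℝ (Fin N)) 1)} [IsFiniteMeasure ν]
    (h : LinearlyMajorizes N μ ν) {f : EuclideanSpace ℝ (Fin N) → ℝ} (hf : Continuous f)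
    {m : ℕ} {U : Fin m → Set (sphere (0 : EuclideanSpace ℝ (Fin N)) 1)}
    (hU : IsMeasurablePartition U) {ℓ : Fin m → EuclideanSpace ℝ (Fin N) →ₗ[ℝ] ℝ}
    (hℓf : ∀ k (x : sphere (0 : EuclideanSpace ℝ (Fin N)) 1), ℓ k x ≤ f x) {ε : ℝ}
    (hfℓ : ∀ k, ∀ x ∈ U k, f x ≤ ℓ k x + ε) :
    ∫ x, f x ∂ν ≤ ∫ x, f x ∂μ + ε * ν.real Set.univ := by
  obtain ⟨hUm, hUd, hUu⟩ := hU
  obtain ⟨μs, hμs, rfl, hμsℓ⟩ := h m U hUm hUd hUu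
  have hint : ∀ (ρ : Measure (sphere (0 : EuclideanSpace ℝ (Fin N)) 1)) [IsFiniteMeasure ρ]
      {g : EuclideanSpace ℝ (Fin N) → ℝ}, Continuous g →
      Integrable (fun x : sphere (0 : EuclideanSpace ℝ (Fin N)) 1 => g x) ρ :=
    fun _ _ _ hg => (hg.comp continuous_subtype_val).integrable_of_hasCompactSupport
      (.of_compactSpace _)
  have hℓ : ∀ k, Continuous (ℓ k) := fun k => (ℓ k).continuous_of_finiteDimensional
  have hpiece : ∀ k, ∫ x in U k, f x ∂ν ≤ ∫ x, f x ∂(μs k) + ε * ν.real (U k) := fun k =>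
    calc ∫ x in U k, f x ∂ν
        ≤ ∫ x in U k, (ℓ k x + ε) ∂ν :=
          setIntegral_mono_on (hint ν hf).integrableOn
            ((hint ν (hℓ k)).add (integrable_const ε)).integrableOn (hUm k) (hfℓ k)
      _ = ∫ x in U k, ℓ k x ∂ν + ε * ν.real (U k) := by
          rw [integral_add (hint ν (hℓ k)).integrableOn (integrable_const ε), setIntegral_const,
            smul_eq_mul, mul_comm]
      _ = ∫ x, ℓ k x ∂(μs k) + ε * ν.real (U k) := by rw [hμsℓ]
      _ ≤ ∫ x, f x ∂(μs k) + ε * ν.real (U k) :=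
          add_le_add_left (integral_mono (hint (μs k) (hℓ k)) (hint (μs k) hf) (hℓf k)) _
  calc ∫ x, f x ∂ν = ∑ k, ∫ x in U k, f x ∂ν := by
        rw [← setIntegral_univ, ← hUu,
          integral_iUnion_fintype hUm hUd fun _ => (hint ν hf).integrableOn]
    _ ≤ ∑ k, (∫ x, f x ∂(μs k) + ε * ν.real (U k)) := Finset.sum_le_sum fun k _ => hpiece k
    _ = ∫ x, f x ∂(∑ k, μs k) + ε * ν.real Set.univ := by
        rw [Finset.sum_add_distrib, integral_finsetSum_measure fun k _ => hint (μs k) hf,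
          ← Finset.mul_sum, ← hUu, measureReal_iUnion_fintype hUd hUm]

theorem linearlyMajorizes_integral_sublinear_le_general {N : ℕ}
    (μ ν : Measure (Metric.sphere (0 : EuclideanSpace ℝ (Fin N)) 1))
    [IsFiniteMeasure ν]
    (h : LinearlyMajorizes N μ ν)
    (p : EuclideanSpace ℝ (Fin N) → ℝ) (hp : Sublinear N p) :
    ∫ x, p (x : EuclideanSpace ℝ (Fin N)) ∂ν
      ≤ ∫ x, p (x : EuclideanSpace ℝ (Fin N)) ∂μ := by
  have hle : ∀ ε > 0, ∫ x, p x ∂ν ≤ ∫ x, p x ∂μ + ε * ν.real Set.univ := fun ε hε => by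
    obtain ⟨m, U, ℓ, hU, hℓp, hpℓ⟩ := hp.exists_partition_sphere_linearMap_approx hε
    exact h.integral_le_add hp.continuous hU (fun k x => hℓp k x) hpℓ
  have hlim : Tendsto (fun ε => ∫ x, p x ∂μ + ε * ν.real Set.univ) (𝓝[>] 0)
      (𝓝 (∫ x, p x ∂μ)) := by
    have hcont : Continuous fun ε : ℝ => ∫ x, p x ∂μ + ε * ν.real Set.univ := by fun_prop
    simpa using (hcont.tendsto 0).mono_left nhdsWithin_le_nhds
  exact ge_of_tendsto hlim (eventually_nhdsWithin_of_forall hle)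

/-- If `μ` linearly majorizes `ν` on the unit sphere, then
`∫ p dμ ≥ ∫ p dν` for every sublinear `p : ℝ^N → ℝ`. -/
theorem linearlyMajorizes_integral_sublinear_le {N : ℕ}
    (μ ν : Measure (Metric.sphere (0 : EuclideanSpace ℝ (Fin N)) 1))
    [IsFiniteMeasure μ] [IsFiniteMeasure ν]
    (h : LinearlyMajorizes N μ ν)
    (p : EuclideanSpace ℝ (Fin N) → ℝ) (hp : Sublinear N p) :
    ∫ x, p (x : EuclideanSpace ℝ (Fin N)) ∂ν
      ≤ ∫ x, p (x : EuclideanSpace ℝ (Fin N)) ∂μ :=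
  linearlyMajorizes_integral_sublinear_le_general μ ν h p hp
end

section
/- Let Q be a compact convex subset of a locally convex real topological vector space X, and let μ and ν be finite positive Borel measures on Q. If μ affinely majorizes ν, then ∫_Q f dμ ≥ ∫_Q f dν for every continuous convex function f : Q → ℝ. -/
/-!
Cover the compact set `Q` by finitely many compact convex cells `K ⊆ Q` on which `f` oscillates
by less than `δ`, split `ν` along a measurable partition subordinate to the cells, and let
`μ = ∑ μₖ` be the matching decomposition. On a cell with `c < f ≤ c + δ`, Hahn–Banach separation
of `K × {c}` from the closed epigraph of `f` yields a continuous affine `a ≤ f` on `Q` with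
`a ≥ c` on `K`, so `∫ (f - δ) dνₖ ≤ ∫ a dνₖ = ∫ a dμₖ ≤ ∫ f dμₖ`. Summing over the cells and
letting `δ → 0` gives the inequality.
-/

open MeasureTheory

/-- A finite positive Borel measure `μ` on a compact convex set `Q` affinely majorizes `ν`
if for every decomposition `ν = νs 1 + … + νs m` into finitely many finite positive measures
there are finite positive measures `μs 1, …, μs m` summing to `μ` such that for each `k`,
`∫ a dμs k = ∫ a dνs k` for every continuous affine function `a : X → ℝ`. -/
def AffinelyMajorizes {X : Type*} [AddCommGroup X] [Module ℝ X] [TopologicalSpace X]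
    [MeasurableSpace X] (Q : Set X) (μ ν : Measure Q) : Prop :=
  ∀ (m : ℕ) (νs : Fin m → Measure Q),
    (∀ k, IsFiniteMeasure (νs k)) → ν = ∑ k, νs k →
    ∃ μs : Fin m → Measure Q,
      (∀ k, IsFiniteMeasure (μs k)) ∧ μ = ∑ k, μs k ∧
      ∀ (k : Fin m) (a : X → ℝ), Continuous a →
        (∀ (x y : X) (t : ℝ), a (t • x + (1 - t) • y) = t * a x + (1 - t) * a y) →
        ∫ x, a (x : X) ∂(μs k) = ∫ x, a (x : X) ∂(νs k)

open Set Filter Topology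

section Measure

variable {α : Type*} [MeasurableSpace α]

theorem measurableSet_disjointed {ι : Type*} [Preorder ι] [LocallyFiniteOrderBot ι]
    {B : ι → Set α} (hB : ∀ k, MeasurableSet (B k)) (k : ι) : MeasurableSet (disjointed B k) :=
  disjointedRec (fun _ i ht => ht.diff (hB i)) (hB k)

namespace MeasureTheory

theorem _root_.Continuous.integrable_of_compactSpace [TopologicalSpace α] [CompactSpace α]
    [OpensMeasurableSpace α] {μ : Measure α} [IsFiniteMeasure μ] {g : α → ℝ}
    (hg : Continuous g) : Integrable g μ :=
  hg.integrable_of_hasCompactSupport (.of_compactSpace g)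

theorem Measure.eq_sum_restrict_disjointed {ι : Type*} [Fintype ι] [LinearOrder ι]
    [LocallyFiniteOrderBot ι] (μ : Measure α) {B : ι → Set α} (hB : ∀ k, MeasurableSet (B k))
    (hcover : ⋃ k, B k = univ) : μ = ∑ k, μ.restrict (disjointed B k) := by
  rw [← Measure.sum_fintype,
    ← Measure.restrict_iUnion (disjoint_disjointed B) (measurableSet_disjointed hB),
    iUnion_disjointed, hcover, Measure.restrict_univ]

theorem integral_sum_measure_le_of_forall_le {ι : Type*} [Fintype ι] {g h : α → ℝ}
    {μs νs : ι → Measure α} (hg : ∀ k, Integrable g (νs k)) (hh : ∀ k, Integrable h (μs k))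
    (hle : ∀ k, ∫ x, g x ∂(νs k) ≤ ∫ x, h x ∂(μs k)) :
    ∫ x, g x ∂(∑ k, νs k) ≤ ∫ x, h x ∂(∑ k, μs k) := by
  rw [integral_finsetSum_measure fun k _ => hg k, integral_finsetSum_measure fun k _ => hh k]
  exact Finset.sum_le_sum fun k _ => hle k

theorem integral_le_of_forall_pos_integral_sub_le {ν : Measure α} [IsFiniteMeasure ν]
    {g : α → ℝ} (hg : Integrable g ν) {b : ℝ} (h : ∀ δ > 0, ∫ x, g x - δ ∂ν ≤ b) :
    ∫ x, g x ∂ν ≤ b := by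
  have hsub : ∀ δ : ℝ, ∫ x, g x - δ ∂ν = ∫ x, g x ∂ν - δ * ν.real univ := fun δ => by
    rw [integral_sub hg (integrable_const δ), integral_const, smul_eq_mul, mul_comm]
  have hlim : Tendsto (fun δ : ℝ => ∫ x, g x ∂ν - δ * ν.real univ) (𝓝[>] 0)
      (𝓝 (∫ x, g x ∂ν)) := by
    have hcont : Continuous fun δ : ℝ => ∫ x, g x ∂ν - δ * ν.real univ := by fun_prop
    exact (hcont.tendsto' 0 _ (by simp)).mono_left nhdsWithin_le_nhds
  exact le_of_tendsto hlim (eventually_nhdsWithin_of_forall fun δ hδ => hsub δ ▸ h δ hδ)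

end MeasureTheory

end Measure

section Convex

variable {X : Type*} [TopologicalSpace X] {Q K : Set X} {f : X → ℝ}

theorem le_of_mem_closure_epigraph {z : X} {t : ℝ} (hf : ContinuousWithinAt f Q z)
    (h : (z, t) ∈ closure {p : X × ℝ | p.1 ∈ Q ∧ f p.1 ≤ p.2}) : f z ≤ t :=
  ContinuousWithinAt.closure_le h (hf.comp continuousWithinAt_fst fun _ hp => hp.1)
    continuousWithinAt_snd fun _ hp => hp.2

variable [AddCommGroup X] [Module ℝ X] [IsTopologicalAddGroup X] [ContinuousSMul ℝ X]
  [LocallyConvexSpace ℝ X]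

theorem exists_isClosed_convex_mem_nhds_subset {x : X} {s : Set X} (hs : s ∈ 𝓝 x) :
    ∃ C ∈ 𝓝 x, IsClosed C ∧ Convex ℝ C ∧ C ⊆ s := by
  obtain ⟨t, ht, htc, hts⟩ := exists_mem_nhds_isClosed_subset hs
  obtain ⟨C, ⟨hC, hCconv⟩, hCt⟩ := (LocallyConvexSpace.convex_basis (𝕜 := ℝ) x).mem_iff.mp ht
  exact ⟨closure C, mem_of_superset hC subset_closure, isClosed_closure, hCconv.closure,
    (closure_minimal hCt htc).trans hts⟩

theorem ConvexOn.exists_continuousLinearMap_add_le (hf : ConvexOn ℝ Q f) (hfc : ContinuousOn f Q)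
    (hK : IsCompact K) (hKconv : Convex ℝ K) (hKne : K.Nonempty) (hKQ : K ⊆ Q) {c : ℝ}
    (hc : ∀ z ∈ K, c < f z) :
    ∃ (φ : X →L[ℝ] ℝ) (b : ℝ), (∀ x ∈ Q, φ x + b ≤ f x) ∧ ∀ z ∈ K, c ≤ φ z + b := by
  set E := closure {p : X × ℝ | p.1 ∈ Q ∧ f p.1 ≤ p.2}
  have hdisj : Disjoint (K ×ˢ {c}) E := by
    refine disjoint_left.mpr ?_
    rintro ⟨z, t⟩ ⟨hz, ht⟩ hzt
    obtain rfl : t = c := ht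
    exact (hc z hz).not_ge (le_of_mem_closure_epigraph (hfc z (hKQ hz)) hzt)
  obtain ⟨L, u, v, hLu, huv, hLv⟩ := geometric_hahn_banach_compact_closed
    (hKconv.prod (convex_singleton c)) (hK.prod isCompact_singleton)
    hf.convex_epigraph.closure isClosed_closure hdisj
  set ψ := L.comp (ContinuousLinearMap.inl ℝ X ℝ)
  set r := L (0, 1)
  have hL : ∀ x s, L (x, s) = ψ x + s * r := fun x s => by
    have : ((x, s) : X × ℝ) = (x, 0) + s • (0, 1) := by ext <;> simp
    rw [this, map_add, map_smul, smul_eq_mul]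
    rfl
  have hepi : ∀ x ∈ Q, ∀ s, f x ≤ s → v < ψ x + s * r := fun x hx s hs =>
    hL x s ▸ hLv _ (subset_closure ⟨hx, hs⟩)
  have hcell : ∀ z ∈ K, ψ z + c * r < u := fun z hz => hL z c ▸ hLu _ ⟨hz, rfl⟩
  -- `(z, max (f z) c)` lies above `(z, c)`, so for `r ≤ 0` it would fall on the cell's side.
  have hr : 0 < r := by
    obtain ⟨z, hz⟩ := hKne
    by_contra! hr
    have h1 := hepi z (hKQ hz) (max (f z) c) (le_max_left _ _)
    have h2 := hcell z hz
    nlinarith [le_max_right (f z) c]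
  have hφ : ∀ x, (-r⁻¹ • ψ) x + v / r = (v - ψ x) / r := fun x => by
    simp only [FunLike.coe_smul, Pi.smul_apply, smul_eq_mul]
    ring
  refine ⟨-r⁻¹ • ψ, v / r, fun x hx => ?_, fun z hz => ?_⟩
  · rw [hφ, div_le_iff₀ hr]
    linarith [hepi x hx (f x) le_rfl]
  · rw [hφ, le_div_iff₀ hr]
    linarith [hcell z hz]

theorem exists_fin_cover_convex_cells_of_oscillation_lt (hQc : IsCompact Q)
    (hQconv : Convex ℝ Q) (hfc : ContinuousOn f Q) {δ : ℝ} (hδ : 0 < δ) :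
    ∃ (m : ℕ) (U K : Fin m → Set X) (c : Fin m → ℝ), (∀ k, IsOpen (U k)) ∧ Q ⊆ ⋃ k, U k ∧
      ∀ k, Q ∩ U k ⊆ K k ∧ IsCompact (K k) ∧ Convex ℝ (K k) ∧ (K k).Nonempty ∧ K k ⊆ Q ∧
        ∀ y ∈ K k, c k < f y ∧ f y - δ ≤ c k := by
  have hloc : ∀ x : Q, ∃ C ∈ 𝓝 (x : X), IsClosed C ∧ Convex ℝ C ∧
      ∀ y ∈ Q ∩ C, |f y - f x| < δ / 2 := by
    intro x
    have hball := hfc x x.2 (Metric.ball_mem_nhds (f x) (half_pos hδ))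
    obtain ⟨C, hC, hCc, hCconv, hCs⟩ :=
      exists_isClosed_convex_mem_nhds_subset (mem_nhdsWithin_iff_eventually.mp hball)
    exact ⟨C, hC, hCc, hCconv, fun y hy => hCs hy.2 hy.1⟩
  choose C hC hCc hCconv hosc using hloc
  obtain ⟨t, ht⟩ := hQc.elim_finite_subcover (fun x : Q => interior (C x))
    (fun _ => isOpen_interior)
    (fun x hx => mem_iUnion.mpr ⟨⟨x, hx⟩, mem_interior_iff_mem_nhds.mpr (hC ⟨x, hx⟩)⟩)
  let x : Fin t.card → Q := fun k => t.equivFin.symm k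
  refine ⟨t.card, fun k => interior (C (x k)), fun k => Q ∩ C (x k), fun k => f (x k) - δ / 2,
    fun k => isOpen_interior, fun y hy => ?_, fun k => ⟨inter_subset_inter_right _ interior_subset,
    hQc.inter_right (hCc _), hQconv.inter (hCconv _), ⟨x k, (x k).2, mem_of_mem_nhds (hC _)⟩,
    inter_subset_left, fun y hy => ?_⟩⟩
  · obtain ⟨i, hi, hyi⟩ := mem_iUnion₂.mp (ht hy)
    exact mem_iUnion.mpr ⟨t.equivFin ⟨i, hi⟩, by simpa [x] using hyi⟩
  · have := abs_lt.mp (hosc _ y hy)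
    constructor <;> linarith

theorem ConvexOn.integral_sub_le_integral_of_ae_mem [MeasurableSpace X] [OpensMeasurableSpace X]
    [CompactSpace Q] (hf : ConvexOn ℝ Q f) (hfc : ContinuousOn f Q) (hK : IsCompact K)
    (hKconv : Convex ℝ K) (hKne : K.Nonempty) (hKQ : K ⊆ Q) {c δ : ℝ}
    (hc : ∀ y ∈ K, c < f y ∧ f y - δ ≤ c) (μ' ν' : Measure Q) [IsFiniteMeasure μ']
    [IsFiniteMeasure ν'] (hν' : ∀ᵐ q : Q ∂ν', (q : X) ∈ K)
    (hμν : ∀ a : X → ℝ, Continuous a →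
      (∀ (x y : X) (t : ℝ), a (t • x + (1 - t) • y) = t * a x + (1 - t) * a y) →
      ∫ q, a q ∂μ' = ∫ q, a q ∂ν') :
    ∫ q, f q - δ ∂ν' ≤ ∫ q, f q ∂μ' := by
  obtain ⟨φ, b, hφQ, hφK⟩ :=
    hf.exists_continuousLinearMap_add_le hfc hK hKconv hKne hKQ fun y hy => (hc y hy).1
  have hfQ : Continuous fun q : Q => f q := hfc.domRestrict
  have haQ : Continuous fun q : Q => φ q + b :=
    (φ.continuous.comp continuous_subtype_val).add continuous_const
  have haffine : ∀ (x y : X) (t : ℝ), φ (t • x + (1 - t) • y) + b =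
      t * (φ x + b) + (1 - t) * (φ y + b) := fun x y t => by
    simp only [map_add, map_smul, smul_eq_mul]
    ring
  calc ∫ q, f q - δ ∂ν' ≤ ∫ q, φ q + b ∂ν' :=
        integral_mono_ae (hfQ.sub continuous_const).integrable_of_compactSpace
          haQ.integrable_of_compactSpace
          (hν'.mono fun q hq => (hc q hq).2.trans (hφK q hq))
    _ = ∫ q, φ q + b ∂μ' := (hμν _ (φ.continuous.add continuous_const) haffine).symm
    _ ≤ ∫ q, f q ∂μ' :=
        integral_mono haQ.integrable_of_compactSpace hfQ.integrable_of_compactSpace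
          fun q => hφQ q q.2

end Convex

theorem integral_convexOn_le_of_affinelyMajorizes_general
    {X : Type*} [AddCommGroup X] [Module ℝ X] [TopologicalSpace X]
    [IsTopologicalAddGroup X] [ContinuousSMul ℝ X] [LocallyConvexSpace ℝ X]
    [MeasurableSpace X] [BorelSpace X]
    (Q : Set X) (hQc : IsCompact Q)
    (μ ν : Measure Q) [IsFiniteMeasure ν]
    (h : AffinelyMajorizes Q μ ν)
    (f : X → ℝ) (hfc : ContinuousOn f Q) (hfconv : ConvexOn ℝ Q f) :
    ∫ x, f (x : X) ∂ν ≤ ∫ x, f (x : X) ∂μ := by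
  have := isCompact_iff_compactSpace.mp hQc
  refine integral_le_of_forall_pos_integral_sub_le
    hfc.domRestrict.integrable_of_compactSpace fun δ hδ => ?_
  obtain ⟨m, U, K, c, hU, hQU, hK⟩ :=
    exists_fin_cover_convex_cells_of_oscillation_lt hQc hfconv.1 hfc hδ
  set B : Fin m → Set Q := fun k => (↑) ⁻¹' U k
  have hB : ∀ k, MeasurableSet (B k) := fun k => measurable_subtype_coe (hU k).measurableSet
  have hBcover : ⋃ k, B k = univ := by
    simp only [B, ← preimage_iUnion]
    exact eq_univ_of_forall fun q => hQU q.2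
  have hν := Measure.eq_sum_restrict_disjointed ν hB hBcover
  obtain ⟨μs, hμs, rfl, hμνs⟩ := h m _ (fun _ => inferInstance) hν
  rw [hν]
  refine integral_sum_measure_le_of_forall_le
    (fun k => (hfc.domRestrict.sub continuous_const).integrable_of_compactSpace)
    (fun k => hfc.domRestrict.integrable_of_compactSpace) fun k => ?_
  obtain ⟨hUK, hKc, hKconv, hKne, hKQ, hc⟩ := hK k
  have hνK : ∀ᵐ q : Q ∂ν.restrict (disjointed B k), (q : X) ∈ K k :=
    ae_restrict_of_forall_mem (measurableSet_disjointed hB k)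
      fun q hq => hUK ⟨q.2, disjointed_subset B k hq⟩
  exact hfconv.integral_sub_le_integral_of_ae_mem hfc hKc hKconv hKne hKQ hc _ _ hνK (hμνs k)

/-- Cartier–Fell–Meyer, sufficiency: if `μ` affinely majorizes `ν` on a compact convex
subset `Q` of a locally convex space, then `∫ f dμ ≥ ∫ f dν` for every continuous convex
function `f` on `Q`. -/
theorem integral_convexOn_le_of_affinelyMajorizes
    {X : Type*} [AddCommGroup X] [Module ℝ X] [TopologicalSpace X]
    [IsTopologicalAddGroup X] [ContinuousSMul ℝ X] [LocallyConvexSpace ℝ X]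
    [MeasurableSpace X] [BorelSpace X]
    (Q : Set X) (hQc : IsCompact Q) (hQconv : Convex ℝ Q)
    (μ ν : Measure Q) [IsFiniteMeasure μ] [IsFiniteMeasure ν]
    (h : AffinelyMajorizes Q μ ν)
    (f : X → ℝ) (hfc : ContinuousOn f Q) (hfconv : ConvexOn ℝ Q f) :
    ∫ x, f (x : X) ∂ν ≤ ∫ x, f (x : X) ∂μ :=
  integral_convexOn_le_of_affinelyMajorizes_general Q hQc μ ν h f hfc hfconv
end

section
/- Let Q be a compact convex subset of a locally convex real topological vector space X, and let μ and ν be finite positive Borel measures on Q. If ∫_Q f dμ ≥ ∫_Q f dν for every continuous convex function f : Q → ℝ, then μ affinely majorizes ν. -/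
/-!
On tuples `f = (f_j)` in `L²(μ)`, `N f = ∫ max_j f_j dμ` is sublinear. For a tuple `a` of continuous
affine functions, `max_j a_j` is continuous and convex on `Q`, so
`∑_j ∫ a_j dν_j ≤ ∫ max_j a_j dν ≤ ∫ max_j a_j dμ = N a`. By Hahn–Banach the functional
`a ↦ ∑_j ∫ a_j dν_j` extends to some `Λ ≤ N`; the components `φ_k = Λ ∘ single k` are then
positive with `∑_k φ_k = ∫ · dμ`. Riesz representation in `L²(μ)` gives densities `g_k ≥ 0` with
`∑_k g_k = 1`, and `μ_k = g_k μ` is the required decomposition of `μ`.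
-/

open MeasureTheory

open Filter Finset
open scoped ENNReal RealInnerProductSpace

namespace MeasureTheory.Lp

variable {α E ι : Type*} [MeasurableSpace α] {μ : Measure α} {p : ℝ≥0∞} [NormedAddCommGroup E]

theorem coeFn_finset_sum (s : Finset ι) (f : ι → Lp E p μ) :
    ⇑(∑ i ∈ s, f i) =ᵐ[μ] ∑ i ∈ s, ⇑(f i) := by
  classical
  induction s using Finset.induction_on with
  | empty => simpa using Lp.coeFn_zero E p μ
  | insert a s ha ih =>
    rw [sum_insert ha, sum_insert ha]
    exact (Lp.coeFn_add _ _).trans (EventuallyEq.rfl.add ih)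

theorem coeFn_finset_sup' [Lattice E] [HasSolidNorm E] [IsOrderedAddMonoid E] {s : Finset ι}
    (hs : s.Nonempty) (f : ι → Lp E p μ) :
    ⇑(s.sup' hs f) =ᵐ[μ] fun x => s.sup' hs (f · x) := by
  induction hs using Finset.Nonempty.cons_induction with
  | singleton a => simp only [sup'_singleton]; rfl
  | cons a s ha hs ih =>
    filter_upwards [Lp.coeFn_sup (f a) (s.sup' hs f), ih] with x h₁ h₂
    rw [sup'_cons hs, sup'_cons hs, h₁, Pi.sup_apply, h₂]

theorem integrable [IsFiniteMeasure μ] [Fact (1 ≤ p)] (f : Lp E p μ) : Integrable f μ :=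
  (Lp.memLp f).integrable Fact.out

end MeasureTheory.Lp

section IntegralSup

variable {α ι : Type*} [MeasurableSpace α] {μ : Measure α} {p : ℝ≥0∞} [Fintype ι] [Nonempty ι]

variable (μ) in
noncomputable def integralSup (f : ι → Lp ℝ p μ) : ℝ :=
  ∫ x, (univ.sup' univ_nonempty f) x ∂μ

theorem integralSup_eq (f : ι → Lp ℝ p μ) :
    integralSup μ f = ∫ x, univ.sup' univ_nonempty (f · x) ∂μ :=
  integral_congr_ae (Lp.coeFn_finset_sup' _ f)

theorem integralSup_smul {c : ℝ} (hc : 0 < c) (f : ι → Lp ℝ p μ) :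
    integralSup μ (c • f) = c * integralSup μ f := by
  rw [integralSup_eq, integralSup_eq, ← integral_const_mul]
  refine integral_congr_ae ?_
  filter_upwards [ae_all_iff.mpr fun j => Lp.coeFn_smul c (f j)] with x hx
  simp only [Pi.smul_apply, hx, smul_eq_mul, mul₀_sup' hc.le]

variable [IsFiniteMeasure μ] [Fact (1 ≤ p)]

theorem integralSup_add_le (f g : ι → Lp ℝ p μ) :
    integralSup μ (f + g) ≤ integralSup μ f + integralSup μ g := by
  have hle : univ.sup' univ_nonempty (f + g) ≤
      univ.sup' univ_nonempty f + univ.sup' univ_nonempty g :=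
    sup'_le _ _ fun j hj => add_le_add (le_sup' f hj) (le_sup' g hj)
  calc integralSup μ (f + g)
      ≤ ∫ x, (univ.sup' univ_nonempty f + univ.sup' univ_nonempty g) x ∂μ :=
        integral_mono_ae (Lp.integrable _) (Lp.integrable _) ((Lp.coeFn_le _ _).mpr hle)
    _ = integralSup μ f + integralSup μ g := by
        rw [integral_congr_ae (Lp.coeFn_add _ _)]
        exact integral_add (Lp.integrable _) (Lp.integrable _)

theorem integralSup_le_integral {f : ι → Lp ℝ p μ} {g : Lp ℝ p μ} (hfg : ∀ j, f j ≤ g) :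
    integralSup μ f ≤ ∫ x, g x ∂μ :=
  integral_mono_ae (Lp.integrable _) (Lp.integrable _)
    ((Lp.coeFn_le _ _).mpr (sup'_le _ _ fun j _ => hfg j))

theorem map_single_nonneg_of_le_integralSup [DecidableEq ι] {Λ : (ι → Lp ℝ p μ) →ₗ[ℝ] ℝ}
    (hΛ : ∀ f, Λ f ≤ integralSup μ f) (k : ι) {u : Lp ℝ p μ} (hu : 0 ≤ u) :
    0 ≤ Λ (Pi.single k u) := by
  have hneg : Λ (Pi.single k (-u)) ≤ 0 := by
    refine (hΛ _).trans ((integralSup_le_integral (g := 0) fun j => ?_).trans_eq ?_)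
    · exact Pi.single_nonpos.mpr (neg_nonpos.mpr hu) j
    · simpa using integral_congr_ae (Lp.coeFn_zero ℝ p μ)
  rwa [Pi.single_neg, map_neg, neg_nonpos] at hneg

theorem sum_map_single_of_le_integralSup [DecidableEq ι] {Λ : (ι → Lp ℝ p μ) →ₗ[ℝ] ℝ}
    (hΛ : ∀ f, Λ f ≤ integralSup μ f) (u : Lp ℝ p μ) :
    ∑ k, Λ (Pi.single k u) = ∫ x, u x ∂μ := by
  have hconst : ∀ v : Lp ℝ p μ, Λ (fun _ => v) ≤ ∫ x, v x ∂μ := fun v =>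
    (hΛ _).trans (integralSup_le_integral fun _ => le_rfl)
  have hneg : ∫ x, (-u) x ∂μ = -∫ x, u x ∂μ := by
    rw [integral_congr_ae (Lp.coeFn_neg u)]; exact integral_neg _
  have hupper := hconst u
  have hlower := hconst (-u)
  rw [show (fun _ : ι => -u) = -fun _ => u from rfl, map_neg, hneg] at hlower
  rw [← map_sum, univ_sum_single]
  linarith

end IntegralSup

theorem exists_extension_comp_of_le_sublinear {A E : Type*} [AddCommGroup A] [Module ℝ A]
    [AddCommGroup E] [Module ℝ E] (T : A →ₗ[ℝ] E) (ℓ : A →ₗ[ℝ] ℝ) (N : E → ℝ)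
    (N_hom : ∀ c : ℝ, 0 < c → ∀ x, N (c • x) = c * N x) (N_add : ∀ x y, N (x + y) ≤ N x + N y)
    (hℓ : ∀ a, ℓ a ≤ N (T a)) :
    ∃ Λ : E →ₗ[ℝ] ℝ, (∀ a, Λ (T a) = ℓ a) ∧ ∀ x, Λ x ≤ N x := by
  have N_zero : N 0 = 0 := by
    have h := N_hom 2 two_pos 0
    rw [smul_zero] at h
    linarith
  -- `ℓ ≤ N ∘ T` forces `ℓ` to vanish on `ker T`, so `ℓ` descends to `range T`.
  have hker : LinearMap.ker T ≤ LinearMap.ker ℓ := fun a ha => by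
    have h₁ := hℓ a
    have h₂ := hℓ (-a)
    rw [LinearMap.mem_ker] at ha ⊢
    rw [ha, N_zero] at h₁
    rw [map_neg, map_neg, ha, neg_zero, N_zero] at h₂
    linarith
  let f : E →ₗ.[ℝ] ℝ :=
    ⟨LinearMap.range T, (LinearMap.ker T).liftQ ℓ hker ∘ₗ T.quotKerEquivRange.symm.toLinearMap⟩
  have hf : ∀ a, f ⟨T a, LinearMap.mem_range_self T a⟩ = ℓ a := fun a => by
    simp [f]
  obtain ⟨Λ, hΛf, hΛN⟩ := exists_extension_of_le_sublinear f N N_hom N_add <| by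
    rintro ⟨_, a, rfl⟩
    exact (hf a).trans_le (hℓ a)
  exact ⟨Λ, fun a => (hΛf ⟨T a, _⟩).trans (hf a), hΛN⟩

section Densities

variable {α ι : Type*} [MeasurableSpace α] {μ : Measure α}

theorem sum_withDensity_ofReal_eq_self [Fintype ι] {g : ι → α → ℝ} (hg : ∀ k, Measurable (g k))
    (hg_nonneg : ∀ k, 0 ≤ᵐ[μ] g k) (hg_sum : ∀ᵐ x ∂μ, ∑ k, g k x = 1) :
    ∑ k, μ.withDensity (fun x => ENNReal.ofReal (g k x)) = μ := by
  ext s hs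
  simp_rw [Measure.finsetSum_apply, withDensity_apply _ hs]
  rw [← lintegral_finsetSum _ fun k _ => (hg k).ennreal_ofReal, ← setLIntegral_one]
  refine lintegral_congr_ae (ae_restrict_of_ae ?_)
  filter_upwards [ae_all_iff.mpr hg_nonneg, hg_sum] with x hx hx_sum
  rw [← ENNReal.ofReal_sum_of_nonneg fun k _ => hx k, hx_sum, ENNReal.ofReal_one]

theorem integral_withDensity_ofReal_eq_inner {g u : Lp ℝ 2 μ} (hg : 0 ≤ g) {f : α → ℝ}
    (hf : u =ᵐ[μ] f) :
    ∫ x, f x ∂μ.withDensity (fun x => ENNReal.ofReal (g x)) = ⟪g, u⟫ := by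
  refine (integral_withDensity_eq_integral_smul
    (Lp.stronglyMeasurable g).measurable.real_toNNReal f).trans ?_
  rw [L2.inner_def]
  refine integral_congr_ae ?_
  filter_upwards [(Lp.coeFn_nonneg g).mpr hg, hf] with x hgx hfx
  simp [NNReal.smul_def, Real.coe_toNNReal _ hgx, hfx, mul_comm]

variable [IsFiniteMeasure μ]

theorem MeasureTheory.L2.integral_eq_inner_const_one (u : Lp ℝ 2 μ) :
    ∫ x, u x ∂μ = ⟪Lp.const 2 μ (1 : ℝ), u⟫ := by
  rw [← indicatorConstLp_univ, L2.inner_indicatorConstLp_one, Measure.restrict_univ]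

theorem exists_nonneg_inner_eq_of_le_integral (φ : Lp ℝ 2 μ →ₗ[ℝ] ℝ)
    (hpos : ∀ u, 0 ≤ u → 0 ≤ φ u) (hle : ∀ u, 0 ≤ u → φ u ≤ ∫ x, u x ∂μ) :
    ∃ g : Lp ℝ 2 μ, 0 ≤ g ∧ ∀ u, φ u = ⟪g, u⟫ := by
  have hbound : ∀ u, ‖φ u‖ ≤ ‖Lp.const 2 μ (1 : ℝ)‖ * ‖u‖ := fun u => by
    have habs : |φ u| ≤ φ |u| := abs_le.mpr
      ⟨by linarith [map_add φ |u| u, hpos _ (neg_le_iff_add_nonneg.mp (neg_le_abs u))],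
        by linarith [map_sub φ |u| u, hpos _ (sub_nonneg.mpr (le_abs_self u))]⟩
    calc ‖φ u‖ ≤ ∫ x, |u| x ∂μ := (habs.trans_eq' (Real.norm_eq_abs _)).trans (hle _ (abs_nonneg u))
      _ ≤ ‖Lp.const 2 μ (1 : ℝ)‖ * ‖u‖ := by
        rw [L2.integral_eq_inner_const_one, ← norm_abs_eq_norm u]
        exact real_inner_le_norm _ _
  set g := (InnerProductSpace.toDual ℝ (Lp ℝ 2 μ)).symm (φ.mkContinuous _ hbound)
  have hg : ∀ u, φ u = ⟪g, u⟫ := fun u => by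
    rw [InnerProductSpace.toDual_symm_apply]; rfl
  refine ⟨g, ?_, hg⟩
  rw [← Lp.coeFn_nonneg]
  refine ae_nonneg_of_forall_setIntegral_nonneg (Lp.integrable g) fun s hs hμs => ?_
  rw [← L2.inner_indicatorConstLp_one hs hμs.ne, real_inner_comm, ← hg]
  refine hpos _ ((Lp.coeFn_nonneg _).mp ?_)
  filter_upwards [indicatorConstLp_coeFn (p := 2) (hs := hs) (hμs := hμs.ne) (c := (1 : ℝ))]
    with x hx
  rw [hx]
  exact Set.indicator_nonneg (fun _ _ => zero_le_one) x

theorem exists_measure_decomposition_of_sum_eq_integral [Fintype ι]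
    (φ : ι → Lp ℝ 2 μ →ₗ[ℝ] ℝ) (hpos : ∀ k u, 0 ≤ u → 0 ≤ φ k u)
    (hsum : ∀ u, ∑ k, φ k u = ∫ x, u x ∂μ) :
    ∃ μs : ι → Measure α, (∀ k, IsFiniteMeasure (μs k)) ∧ μ = ∑ k, μs k ∧
      ∀ k (u : Lp ℝ 2 μ) (f : α → ℝ), u =ᵐ[μ] f → ∫ x, f x ∂(μs k) = φ k u := by
  have hle : ∀ k u, 0 ≤ u → φ k u ≤ ∫ x, u x ∂μ := fun k u hu =>
    (hsum u).symm ▸ single_le_sum (fun j _ => hpos j u hu) (mem_univ k)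
  choose g hg_nonneg hg using fun k => exists_nonneg_inner_eq_of_le_integral (φ k) (hpos k) (hle k)
  have hg_sum : ∑ k, g k = Lp.const 2 μ (1 : ℝ) := ext_inner_right ℝ fun u => by
    rw [sum_inner, ← L2.integral_eq_inner_const_one, ← hsum]
    exact sum_congr rfl fun k _ => (hg k u).symm
  have hg_sum_ae : ∀ᵐ x ∂μ, ∑ k, g k x = 1 := by
    have h : ⇑(∑ k, g k) =ᵐ[μ] fun _ => (1 : ℝ) := hg_sum ▸ Lp.coeFn_const 2 μ (1 : ℝ)
    filter_upwards [(Lp.coeFn_finset_sum univ g).symm.trans h] with x hx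
    simpa using hx
  refine ⟨fun k => μ.withDensity (fun x => ENNReal.ofReal (g k x)),
    fun k => isFiniteMeasure_withDensity_ofReal (Lp.integrable (g k)).2,
    (sum_withDensity_ofReal_eq_self (fun k => (Lp.stronglyMeasurable (g k)).measurable)
      (fun k => (Lp.coeFn_nonneg _).mpr (hg_nonneg k)) hg_sum_ae).symm,
    fun k u f hf => (integral_withDensity_ofReal_eq_inner (hg_nonneg k) hf).trans (hg k u).symm⟩

end Densities

noncomputable def ContinuousMap.integralₗ {K : Type*} [TopologicalSpace K] [CompactSpace K]
    [MeasurableSpace K] [OpensMeasurableSpace K] (ν : Measure K) [IsFiniteMeasure ν] :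
    C(K, ℝ) →ₗ[ℝ] ℝ where
  toFun f := ∫ x, f x ∂ν
  map_add' f g := integral_add ((BoundedContinuousFunction.mkOfCompact f).integrable ν)
    ((BoundedContinuousFunction.mkOfCompact g).integrable ν)
  map_smul' c _ := integral_const_mul c _

section AffineFunctions

variable {X : Type*} [AddCommGroup X] [Module ℝ X] [TopologicalSpace X]

variable (X) in
def continuousAffineFunctions : Submodule ℝ (X → ℝ) where
  carrier := {a | Continuous a ∧
    ∀ (x y : X) (t : ℝ), a (t • x + (1 - t) • y) = t * a x + (1 - t) * a y}
  add_mem' := fun ⟨ha, ha'⟩ ⟨hb, hb'⟩ =>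
    ⟨ha.add hb, fun x y t => by simp only [Pi.add_apply, ha', hb']; ring⟩
  zero_mem' := ⟨continuous_const, fun _ _ _ => by simp⟩
  smul_mem' := fun c a ⟨ha, ha'⟩ =>
    ⟨ha.const_smul c, fun x y t => by simp only [Pi.smul_apply, smul_eq_mul, ha']; ring⟩

theorem convexOn_of_mem_continuousAffineFunctions {Q : Set X} (hQ : Convex ℝ Q) {a : X → ℝ}
    (ha : a ∈ continuousAffineFunctions X) : ConvexOn ℝ Q a :=
  ⟨hQ, fun x _ y _ s t _ _ hst => by
    obtain rfl : t = 1 - s := by linarith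
    exact (ha.2 x y s).le⟩

variable (Q : Set X)

def continuousAffineFunctions.restrict : continuousAffineFunctions X →ₗ[ℝ] C(Q, ℝ) where
  toFun a := ⟨fun x => a.1 x, a.2.1.comp continuous_subtype_val⟩
  map_add' _ _ := rfl
  map_smul' _ _ := rfl

variable [MeasurableSpace X] [BorelSpace X] [CompactSpace Q] {ι : Type*}

noncomputable def affineTuplesToLp (μ : Measure Q) [IsFiniteMeasure μ] :
    (ι → continuousAffineFunctions X) →ₗ[ℝ] ι → Lp ℝ 2 μ :=
  ((ContinuousMap.toLp 2 μ ℝ : C(Q, ℝ) →L[ℝ] Lp ℝ 2 μ).toLinearMap ∘ₗ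
    continuousAffineFunctions.restrict Q).compLeft ι

noncomputable def sumIntegrals [Fintype ι] (νs : ι → Measure Q) [∀ k, IsFiniteMeasure (νs k)] :
    (ι → continuousAffineFunctions X) →ₗ[ℝ] ℝ :=
  ∑ j, ContinuousMap.integralₗ (νs j) ∘ₗ continuousAffineFunctions.restrict Q ∘ₗ LinearMap.proj j

variable {Q}

theorem affineTuplesToLp_single [DecidableEq ι] (μ : Measure Q) [IsFiniteMeasure μ] (k : ι)
    (a : continuousAffineFunctions X) :
    affineTuplesToLp Q μ (Pi.single k a) =
      Pi.single k (ContinuousMap.toLp 2 μ ℝ (continuousAffineFunctions.restrict Q a)) := by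
  funext j
  exact Pi.apply_single (fun _ => (ContinuousMap.toLp 2 μ ℝ).toLinearMap ∘ₗ
    continuousAffineFunctions.restrict Q) (fun _ => map_zero _) k a j

theorem sumIntegrals_apply [Fintype ι] (νs : ι → Measure Q) [∀ k, IsFiniteMeasure (νs k)]
    (a : ι → continuousAffineFunctions X) :
    sumIntegrals Q νs a = ∑ j, ∫ x, (a j : X → ℝ) x ∂(νs j) := by
  simp only [sumIntegrals, LinearMap.sum_apply, LinearMap.comp_apply, LinearMap.proj_apply]
  rfl

theorem sumIntegrals_single [Fintype ι] [DecidableEq ι] (νs : ι → Measure Q)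
    [∀ k, IsFiniteMeasure (νs k)] (k : ι) (a : continuousAffineFunctions X) :
    sumIntegrals Q νs (Pi.single k a) = ∫ x, (a : X → ℝ) x ∂(νs k) := by
  rw [sumIntegrals_apply, sum_eq_single k (fun j _ hj => by simp [Pi.single_eq_of_ne hj])
    (by simp), Pi.single_eq_same]

end AffineFunctions

theorem sumIntegrals_le_integralSup {X : Type*} [AddCommGroup X] [Module ℝ X]
    [TopologicalSpace X] [MeasurableSpace X] [BorelSpace X] {Q : Set X} [CompactSpace Q]
    (hQ : Convex ℝ Q) {ι : Type*} [Fintype ι] [Nonempty ι] {μ ν : Measure Q} [IsFiniteMeasure μ]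
    (h : ∀ f : X → ℝ, ContinuousOn f Q → ConvexOn ℝ Q f → ∫ x, f x ∂ν ≤ ∫ x, f x ∂μ)
    {νs : ι → Measure Q} [∀ k, IsFiniteMeasure (νs k)] (hν : ν = ∑ k, νs k)
    (a : ι → continuousAffineFunctions X) :
    sumIntegrals Q νs a ≤ integralSup μ (affineTuplesToLp Q μ a) := by
  set F : X → ℝ := univ.sup' univ_nonempty fun j => (a j : X → ℝ)
  have hF : Continuous F := Continuous.finset_sup' _ fun j _ => (a j).2.1
  have hF_convex : ConvexOn ℝ Q F := sup'_induction _ _ (fun _ h₁ _ h₂ => h₁.sup h₂)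
    fun j _ => convexOn_of_mem_continuousAffineFunctions hQ (a j).2
  have hF_int : ∀ j, Integrable (fun x : Q => F x) (νs j) := fun j =>
    (BoundedContinuousFunction.mkOfCompact ⟨_, hF.comp continuous_subtype_val⟩).integrable _
  calc sumIntegrals Q νs a = ∑ j, ∫ x, (a j : X → ℝ) x ∂(νs j) := sumIntegrals_apply νs a
    _ ≤ ∑ j, ∫ x, F x ∂(νs j) := sum_le_sum fun j _ => integral_mono
        ((BoundedContinuousFunction.mkOfCompact
          (continuousAffineFunctions.restrict Q (a j))).integrable _)
        (hF_int j) fun x => by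
          simpa only [F, Finset.sup'_apply] using le_sup' (fun i => (a i : X → ℝ) x) (mem_univ j)
    _ = ∫ x, F x ∂ν := by rw [hν, integral_finsetSum_measure fun j _ => hF_int j]
    _ ≤ ∫ x, F x ∂μ := h F hF.continuousOn hF_convex
    _ = integralSup μ (affineTuplesToLp Q μ a) := by
        rw [integralSup_eq]
        refine integral_congr_ae ?_
        filter_upwards [ae_all_iff.mpr fun j =>
          ContinuousMap.coeFn_toLp (p := 2) (𝕜 := ℝ) μ (continuousAffineFunctions.restrict Q (a j))]
          with x hx
        simp only [F, Finset.sup'_apply, affineTuplesToLp, LinearMap.compLeft_apply,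
          Function.comp_apply, ContinuousLinearMap.coe_coe, LinearMap.comp_apply, hx]
        rfl

theorem affinelyMajorizes_of_forall_convexOn_general
    {X : Type*} [AddCommGroup X] [Module ℝ X] [TopologicalSpace X]
    [MeasurableSpace X] [BorelSpace X]
    (Q : Set X) (hQc : IsCompact Q) (hQconv : Convex ℝ Q)
    (μ ν : Measure Q) [IsFiniteMeasure μ]
    (h : ∀ f : X → ℝ, ContinuousOn f Q → ConvexOn ℝ Q f →
      ∫ x, f (x : X) ∂ν ≤ ∫ x, f (x : X) ∂μ) :
    AffinelyMajorizes Q μ ν := by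
  have : CompactSpace Q := isCompact_iff_compactSpace.mp hQc
  intro m νs hνs hν
  rcases isEmpty_or_nonempty (Fin m) with hm | hm
  · have hμ : μ.real Set.univ ≤ 0 := by
      simpa [show ν = 0 by simpa using hν] using
        h (fun _ => -1) continuousOn_const (convexOn_const _ hQconv)
    refine ⟨0, isEmptyElim, ?_, isEmptyElim⟩
    simpa using Measure.measure_univ_eq_zero.mp
      ((measureReal_eq_zero_iff).mp (le_antisymm hμ measureReal_nonneg))
  obtain ⟨Λ, hΛT, hΛN⟩ := exists_extension_comp_of_le_sublinear (affineTuplesToLp Q μ)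
    (sumIntegrals Q νs) (integralSup μ) (fun _ => integralSup_smul) integralSup_add_le
    (sumIntegrals_le_integralSup hQconv h hν)
  obtain ⟨μs, hμs_fin, hμ, hμs⟩ := exists_measure_decomposition_of_sum_eq_integral
    (fun k => Λ ∘ₗ LinearMap.single ℝ (fun _ => Lp ℝ 2 μ) k)
    (fun k _ hu => map_single_nonneg_of_le_integralSup hΛN k hu)
    (sum_map_single_of_le_integralSup hΛN)
  refine ⟨μs, hμs_fin, hμ, fun k a hac haff => ?_⟩
  let a' : continuousAffineFunctions X := ⟨a, hac, haff⟩
  calc ∫ x, a x ∂(μs k)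
      = Λ (Pi.single k (ContinuousMap.toLp 2 μ ℝ (continuousAffineFunctions.restrict Q a'))) :=
        hμs k _ _ (ContinuousMap.coeFn_toLp _ _)
    _ = ∫ x, a x ∂(νs k) := by
        rw [← affineTuplesToLp_single, hΛT, sumIntegrals_single]

/-- Cartier–Fell–Meyer, necessity: if `∫ f dμ ≥ ∫ f dν` for every continuous convex
function `f` on a compact convex subset `Q` of a locally convex space, then `μ` affinely
majorizes `ν`. -/
theorem affinelyMajorizes_of_forall_convexOn
    {X : Type*} [AddCommGroup X] [Module ℝ X] [TopologicalSpace X]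
    [IsTopologicalAddGroup X] [ContinuousSMul ℝ X] [LocallyConvexSpace ℝ X]
    [MeasurableSpace X] [BorelSpace X]
    (Q : Set X) (hQc : IsCompact Q) (hQconv : Convex ℝ Q)
    (μ ν : Measure Q) [IsFiniteMeasure μ] [IsFiniteMeasure ν]
    (h : ∀ f : X → ℝ, ContinuousOn f Q → ConvexOn ℝ Q f →
      ∫ x, f (x : X) ∂ν ≤ ∫ x, f (x : X) ∂μ) :
    AffinelyMajorizes Q μ ν :=
  affinelyMajorizes_of_forall_convexOn_general Q hQc hQconv μ ν h
end

section
/- (Decomposition theorem, sufficiency.) Let X be a Riesz space, let H_1,…,H_N be cones in X, and let f and g be positive linear functionals on X. Suppose that for every decomposition g = g_1 + … + g_N of g into a sum of N positive linear functionals there is a decomposition f = f_1 + … + f_N of f into a sum of N positive linear functionals such that f_k(h_k) ≥ g_k(h_k) for all h_k ∈ H_k and each k = 1,…,N. Then f(h_1 ∨ … ∨ h_N) ≥ g(h_1 ∨ … ∨ h_N) for all h_k ∈ H_k (k = 1,…,N). -/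
/-!
Write `s = h 1 ⊔ … ⊔ h N`. The key fact is that `g s` is attained by a decomposition of `g`:
there are positive `g k` with `g = ∑ g k` and `g s = ∑ g k (h k)`. The hypothesis turns these into
positive `f k` with `f = ∑ f k` and `g k (h k) ≤ f k (h k)`, hence
`g s = ∑ g k (h k) ≤ ∑ f k (h k) ≤ ∑ f k s = f s`.

The decomposition is built one supremum at a time from the two-term case `g (a ⊔ b) = g₁ a + g₂ b`.
That case reduces to splitting `g` along two disjoint positive elements `u = a ⊔ b - a` and
`v = a ⊔ b - b`: the functional `x ↦ ⨆ t, g (x ⊓ t • v)` is additive and positively homogeneous on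
the positive cone, so it extends to a positive linear functional `g₁ ≤ g` with `g₁ u = 0` and
`g₁ v = g v`.
-/

open Finset

lemma smul_inf_of_pos {𝕜 M : Type*} [Field 𝕜] [LinearOrder 𝕜] [IsStrictOrderedRing 𝕜]
    [Lattice M] [AddCommGroup M] [Module 𝕜 M] [PosSMulMono 𝕜 M] {c : 𝕜} (hc : 0 < c) (a b : M) :
    c • (a ⊓ b) = c • a ⊓ c • b :=
  (OrderIso.smulRight hc).map_inf a b

section RieszSpace

variable {X : Type*} [Lattice X] [AddCommGroup X]

lemma add_inf_le_inf_add_inf [IsOrderedAddMonoid X] {x y w : X} (hx : 0 ≤ x) (hy : 0 ≤ y)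
    (hw : 0 ≤ w) : (x + y) ⊓ w ≤ x ⊓ w + y ⊓ w := by
  rw [inf_add, add_inf, add_inf]
  refine le_inf (le_inf inf_le_left ?_) (le_inf ?_ ?_)
  · exact inf_le_right.trans (le_add_of_nonneg_left hx)
  · exact inf_le_right.trans (le_add_of_nonneg_right hy)
  · exact inf_le_right.trans (le_add_of_nonneg_left hw)

variable [Module ℝ X]

/-- For `x ≥ 0` this is the part of `g x` carried by the band generated by `v`. -/
noncomputable def bandPart (g : X →ₗ[ℝ] ℝ) (v x : X) : ℝ := ⨆ t : ℝ, g (x ⊓ t • v)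

variable {g : X →ₗ[ℝ] ℝ} {v : X}

lemma bandPart_smul [PosSMulMono ℝ X] {c : ℝ} (hc : 0 < c) (x : X) :
    bandPart g v (c • x) = c * bandPart g v x := by
  have hterm (t : ℝ) : g (c • x ⊓ t • v) = c * g (x ⊓ (c⁻¹ * t) • v) := by
    rw [← smul_eq_mul, ← map_smul, smul_inf_of_pos hc, smul_smul, mul_inv_cancel_left₀ hc.ne']
  simp only [bandPart, hterm, ← Real.mul_iSup_of_nonneg hc.le]
  congr 1
  exact (Equiv.mulLeft₀ c⁻¹ (inv_ne_zero hc.ne')).iSup_comp (g := fun t ↦ g (x ⊓ t • v))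

variable [IsOrderedAddMonoid X]

lemma bddAbove_range_apply_inf_smul (hg : ∀ x, 0 ≤ x → 0 ≤ g x) (x : X) :
    BddAbove (Set.range fun t : ℝ ↦ g (x ⊓ t • v)) :=
  ⟨g x, by rintro _ ⟨t, rfl⟩; exact (monotone_iff_map_nonneg g).2 hg inf_le_left⟩

lemma apply_inf_smul_le_bandPart (hg : ∀ x, 0 ≤ x → 0 ≤ g x) (x : X) (t : ℝ) :
    g (x ⊓ t • v) ≤ bandPart g v x :=
  le_ciSup (bddAbove_range_apply_inf_smul hg x) t

lemma bandPart_le (hg : ∀ x, 0 ≤ x → 0 ≤ g x) (x : X) : bandPart g v x ≤ g x :=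
  ciSup_le fun _ ↦ (monotone_iff_map_nonneg g).2 hg inf_le_left

lemma bandPart_nonneg (hg : ∀ x, 0 ≤ x → 0 ≤ g x) {x : X} (hx : 0 ≤ x) : 0 ≤ bandPart g v x := by
  simpa [inf_eq_right.2 hx] using apply_inf_smul_le_bandPart hg (v := v) x 0

lemma bandPart_self (hg : ∀ x, 0 ≤ x → 0 ≤ g x) : bandPart g v v = g v :=
  le_antisymm (bandPart_le hg v) (by simpa using apply_inf_smul_le_bandPart hg (v := v) v 1)

variable [PosSMulMono ℝ X]

lemma apply_inf_smul_mono (hg : ∀ x, 0 ≤ x → 0 ≤ g x) (hv : 0 ≤ v) (x : X) {s t : ℝ}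
    (hst : s ≤ t) : g (x ⊓ s • v) ≤ g (x ⊓ t • v) :=
  (monotone_iff_map_nonneg g).2 hg (inf_le_inf_left x (smul_le_smul_of_nonneg_right hst hv))

lemma bandPart_add (hg : ∀ x, 0 ≤ x → 0 ≤ g x) (hv : 0 ≤ v) {x y : X} (hx : 0 ≤ x)
    (hy : 0 ≤ y) : bandPart g v (x + y) = bandPart g v x + bandPart g v y := by
  refine le_antisymm (ciSup_le fun t ↦ ?_) (ciSup_add_ciSup_le fun s t ↦ ?_)
  · have ht : (0 : X) ≤ max t 0 • v := smul_nonneg (le_max_right t 0) hv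
    calc g ((x + y) ⊓ t • v) ≤ g ((x + y) ⊓ max t 0 • v) :=
          apply_inf_smul_mono hg hv _ (le_max_left t 0)
      _ ≤ g (x ⊓ max t 0 • v) + g (y ⊓ max t 0 • v) := by
          rw [← map_add]
          exact (monotone_iff_map_nonneg g).2 hg (add_inf_le_inf_add_inf hx hy ht)
      _ ≤ bandPart g v x + bandPart g v y :=
          add_le_add (apply_inf_smul_le_bandPart hg x _) (apply_inf_smul_le_bandPart hg y _)
  · calc g (x ⊓ s • v) + g (y ⊓ t • v) = g (x ⊓ s • v + y ⊓ t • v) := (map_add g _ _).symm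
      _ ≤ g ((x + y) ⊓ (s + t) • v) := by
          refine (monotone_iff_map_nonneg g).2 hg (le_inf (add_le_add inf_le_left inf_le_left) ?_)
          rw [add_smul]
          exact add_le_add inf_le_right inf_le_right
      _ ≤ bandPart g v (x + y) := apply_inf_smul_le_bandPart hg _ _

lemma bandPart_eq_zero_of_inf_eq_zero (hg : ∀ x, 0 ≤ x → 0 ≤ g x) (hv : 0 ≤ v) {u : X}
    (hu : 0 ≤ u) (huv : u ⊓ v = 0) : bandPart g v u = 0 := by
  refine le_antisymm (ciSup_le fun t ↦ ?_) (bandPart_nonneg hg hu)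
  have hs : (0 : ℝ) < max t 1 := lt_max_of_lt_right one_pos
  have hle : u ⊓ t • v ≤ max t 1 • u ⊓ max t 1 • v :=
    inf_le_inf (le_smul_of_one_le_left hu (le_max_right t 1))
      (smul_le_smul_of_nonneg_right (le_max_left t 1) hv)
  rw [← smul_inf_of_pos hs, huv, smul_zero] at hle
  simpa using (monotone_iff_map_nonneg g).2 hg hle

lemma exists_linearMap_eq_of_nonneg (φ : X → ℝ)
    (hadd : ∀ x y, 0 ≤ x → 0 ≤ y → φ (x + y) = φ x + φ y)
    (hsmul : ∀ c : ℝ, 0 < c → ∀ x, 0 ≤ x → φ (c • x) = c * φ x) :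
    ∃ L : X →ₗ[ℝ] ℝ, ∀ x, 0 ≤ x → L x = φ x := by
  set ψ : X → ℝ := fun x ↦ φ x⁺ - φ x⁻
  have hψ_sub {a b : X} (ha : 0 ≤ a) (hb : 0 ≤ b) : ψ (a - b) = φ a - φ b := by
    have h := congrArg φ (sub_eq_sub_iff_add_eq_add.1 (posPart_sub_negPart (a - b)))
    rw [hadd _ _ (posPart_nonneg _) hb, hadd _ _ ha (negPart_nonneg _)] at h
    linarith
  have hψ_add (x y : X) : ψ (x + y) = ψ x + ψ y := by
    conv_lhs => rw [← posPart_sub_negPart x, ← posPart_sub_negPart y, sub_add_sub_comm]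
    rw [hψ_sub (add_nonneg (posPart_nonneg _) (posPart_nonneg _))
      (add_nonneg (negPart_nonneg _) (negPart_nonneg _)),
      hadd _ _ (posPart_nonneg _) (posPart_nonneg _),
      hadd _ _ (negPart_nonneg _) (negPart_nonneg _)]
    ring
  have hψ_smul {c : ℝ} (hc : 0 < c) (x : X) : ψ (c • x) = c * ψ x := by
    conv_lhs => rw [← posPart_sub_negPart x, smul_sub]
    rw [hψ_sub (smul_nonneg hc.le (posPart_nonneg _)) (smul_nonneg hc.le (negPart_nonneg _)),
      hsmul c hc _ (posPart_nonneg _), hsmul c hc _ (negPart_nonneg _)]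
    ring
  let L₀ : X →+ ℝ := AddMonoidHom.mk' ψ hψ_add
  refine ⟨⟨L₀, fun c x ↦ ?_⟩, fun x hx ↦ ?_⟩
  · show L₀ (c • x) = c * L₀ x
    rcases lt_trichotomy c 0 with hc | rfl | hc
    · calc L₀ (c • x) = L₀ ((-c) • -x) := by rw [neg_smul_neg]
        _ = -c * L₀ (-x) := hψ_smul (neg_pos.2 hc) (-x)
        _ = c * L₀ x := by rw [map_neg]; ring
    · simp
    · exact hψ_smul hc x
  · have hφ0 : φ 0 = 0 := by simpa using hadd 0 0 le_rfl le_rfl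
    show ψ x = φ x
    simpa [hφ0] using hψ_sub hx le_rfl

lemma exists_add_eq_of_inf_eq_zero (hg : ∀ x, 0 ≤ x → 0 ≤ g x) {u v : X} (hu : 0 ≤ u)
    (hv : 0 ≤ v) (huv : u ⊓ v = 0) :
    ∃ g₁ g₂ : X →ₗ[ℝ] ℝ, (∀ x, 0 ≤ x → 0 ≤ g₁ x) ∧ (∀ x, 0 ≤ x → 0 ≤ g₂ x) ∧
      g = g₁ + g₂ ∧ g₁ u = 0 ∧ g₂ v = 0 := by
  obtain ⟨L, hL⟩ := exists_linearMap_eq_of_nonneg (bandPart g v)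
    (fun _ _ hx hy ↦ bandPart_add hg hv hx hy) (fun _ hc x _ ↦ bandPart_smul hc x)
  refine ⟨L, g - L, fun x hx ↦ ?_, fun x hx ↦ ?_, (add_sub_cancel L g).symm, ?_, ?_⟩
  · rw [hL x hx]
    exact bandPart_nonneg hg hx
  · rw [LinearMap.sub_apply, hL x hx, sub_nonneg]
    exact bandPart_le hg x
  · rw [hL u hu, bandPart_eq_zero_of_inf_eq_zero hg hv hu huv]
  · rw [LinearMap.sub_apply, hL v hv, bandPart_self hg, sub_self]

lemma exists_add_eq_apply_sup (hg : ∀ x, 0 ≤ x → 0 ≤ g x) (a b : X) :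
    ∃ g₁ g₂ : X →ₗ[ℝ] ℝ, (∀ x, 0 ≤ x → 0 ≤ g₁ x) ∧ (∀ x, 0 ≤ x → 0 ≤ g₂ x) ∧
      g = g₁ + g₂ ∧ g (a ⊔ b) = g₁ a + g₂ b := by
  obtain ⟨g₁, g₂, hg₁, hg₂, rfl, ha, hb⟩ := exists_add_eq_of_inf_eq_zero hg
    (sub_nonneg.2 le_sup_left) (sub_nonneg.2 le_sup_right) (by rw [← sub_sup a b (a ⊔ b), sub_self])
  refine ⟨g₁, g₂, hg₁, hg₂, rfl, ?_⟩
  rw [map_sub, sub_eq_zero] at ha hb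
  rw [LinearMap.add_apply, ha, hb]

lemma exists_sum_eq_apply_sup' (hg : ∀ x, 0 ≤ x → 0 ≤ g x) {ι : Type*} {s : Finset ι}
    (hs : s.Nonempty) (h : ι → X) :
    ∃ gs : ι → X →ₗ[ℝ] ℝ, (∀ i, ∀ x, 0 ≤ x → 0 ≤ gs i x) ∧ g = ∑ i ∈ s, gs i ∧
      g (s.sup' hs h) = ∑ i ∈ s, gs i (h i) := by
  classical
  induction hs using Finset.Nonempty.cons_induction generalizing g with
  | singleton i => exact ⟨fun _ ↦ g, fun _ ↦ hg, by simp, by simp⟩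
  | cons i s hi hs ih =>
    obtain ⟨g₁, g₂, hg₁, hg₂, rfl, hsplit⟩ := exists_add_eq_apply_sup hg (h i) (s.sup' hs h)
    obtain ⟨gs, hgs, rfl, hsum⟩ := ih hg₂
    have hupdate : ∀ j ∈ s, Function.update gs i g₁ j = gs j :=
      fun j hj ↦ Function.update_of_ne (ne_of_mem_of_not_mem hj hi) _ _
    refine ⟨Function.update gs i g₁, fun j ↦ ?_, ?_, ?_⟩
    · rcases eq_or_ne j i with rfl | hj
      · simpa using hg₁
      · simpa [hj] using hgs j
    · rw [sum_cons, Function.update_self, sum_congr rfl hupdate]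
    · rw [sum_cons, Function.update_self, sup'_cons hs, hsplit, hsum]
      exact congrArg _ (sum_congr rfl fun j hj ↦ by rw [hupdate j hj])

end RieszSpace

theorem decomposition_sufficiency_general
    {X : Type*} [Lattice X] [AddCommGroup X]
    [CovariantClass X X (· + ·) (· ≤ ·)] [Module ℝ X] [PosSMulMono ℝ X]
    {N : ℕ} (hN : 0 < N) (H : Fin N → Set X)
    (f g : X →ₗ[ℝ] ℝ)
    (hg : ∀ x : X, 0 ≤ x → 0 ≤ g x)
    (hyp : ∀ gs : Fin N → (X →ₗ[ℝ] ℝ),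
      (∀ k, ∀ x : X, 0 ≤ x → 0 ≤ gs k x) → g = ∑ k, gs k →
      ∃ fs : Fin N → (X →ₗ[ℝ] ℝ),
        (∀ k, ∀ x : X, 0 ≤ x → 0 ≤ fs k x) ∧ f = ∑ k, fs k ∧
        ∀ k, ∀ h ∈ H k, gs k h ≤ fs k h) :
    ∀ h : Fin N → X, (∀ k, h k ∈ H k) →
      g (Finset.univ.sup' (Finset.univ_nonempty_iff.mpr ⟨⟨0, hN⟩⟩) h)
        ≤ f (Finset.univ.sup' (Finset.univ_nonempty_iff.mpr ⟨⟨0, hN⟩⟩) h) := by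
  have : IsOrderedAddMonoid X := { add_le_add_left := fun _ _ h c ↦ add_le_add_left h c }
  intro h hH
  obtain ⟨gs, hgs, hg_sum, hg_sup⟩ :=
    exists_sum_eq_apply_sup' hg (univ_nonempty_iff.mpr ⟨⟨0, hN⟩⟩) h
  obtain ⟨fs, hfs, hf_sum, hgs_le⟩ := hyp gs hgs hg_sum
  calc _ = ∑ k, gs k (h k) := hg_sup
    _ ≤ ∑ k, fs k (h k) := sum_le_sum fun k _ ↦ hgs_le k (h k) (hH k)
    _ ≤ ∑ k, fs k (univ.sup' _ h) :=
        sum_le_sum fun k _ ↦ (monotone_iff_map_nonneg (fs k)).2 (hfs k) (le_sup' h (mem_univ k))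
    _ = _ := by rw [hf_sum, LinearMap.sum_apply]

/-- Decomposition theorem, sufficiency.  Let `X` be a Riesz space, `H 1, …, H N` cones in
`X`, and `f`, `g` positive linear functionals on `X`.  If for every decomposition
`g = g 1 + … + g N` into positive linear functionals there is a decomposition
`f = f 1 + … + f N` into positive linear functionals with `f k (h) ≥ g k (h)` for all
`h ∈ H k`, then `f (h 1 ⊔ … ⊔ h N) ≥ g (h 1 ⊔ … ⊔ h N)` for all `h k ∈ H k`. -/
theorem decomposition_sufficiency
    {X : Type*} [Lattice X] [AddCommGroup X]
    [CovariantClass X X (· + ·) (· ≤ ·)] [Module ℝ X] [PosSMulMono ℝ X]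
    {N : ℕ} (hN : 0 < N) (H : Fin N → Set X)
    (hHadd : ∀ k, ∀ a ∈ H k, ∀ b ∈ H k, a + b ∈ H k)
    (hHsmul : ∀ k, ∀ c : ℝ, 0 ≤ c → ∀ a ∈ H k, c • a ∈ H k)
    (f g : X →ₗ[ℝ] ℝ)
    (hf : ∀ x : X, 0 ≤ x → 0 ≤ f x) (hg : ∀ x : X, 0 ≤ x → 0 ≤ g x)
    (hyp : ∀ gs : Fin N → (X →ₗ[ℝ] ℝ),
      (∀ k, ∀ x : X, 0 ≤ x → 0 ≤ gs k x) → g = ∑ k, gs k →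
      ∃ fs : Fin N → (X →ₗ[ℝ] ℝ),
        (∀ k, ∀ x : X, 0 ≤ x → 0 ≤ fs k x) ∧ f = ∑ k, fs k ∧
        ∀ k, ∀ h ∈ H k, gs k h ≤ fs k h) :
    ∀ h : Fin N → X, (∀ k, h k ∈ H k) →
      g (Finset.univ.sup' (Finset.univ_nonempty_iff.mpr ⟨⟨0, hN⟩⟩) h)
        ≤ f (Finset.univ.sup' (Finset.univ_nonempty_iff.mpr ⟨⟨0, hN⟩⟩) h) :=
  decomposition_sufficiency_general hN H f g hg hyp
end

section
/- If a finite positive Borel measure μ on the unit sphere S_{N-1} linearly majorizes a finite positive Borel measure ν on S_{N-1}, then for any finitely many linear functionals ℓ_1,…,ℓ_m on ℝ^N one has ∫_{S_{N-1}} max(ℓ_1,…,ℓ_m) dμ ≥ ∫_{S_{N-1}} max(ℓ_1,…,ℓ_m) dν, where max(ℓ_1,…,ℓ_m)(x) = max_k ℓ_k(x). -/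
open MeasureTheory

/-!
Split the sphere into Borel pieces `U k` on which `ℓ k` attains `f = max_j ℓ j`, and let
`μ = ∑ μ_k` be the decomposition furnished by linear majorization. Then
`∫ f dν = ∑ ∫_{U k} ℓ k dν = ∑ ∫ ℓ k dμ_k ≤ ∑ ∫ f dμ_k = ∫ f dμ`,
the inequality because `ℓ k ≤ f` everywhere.
-/

section

open Function

variable {X ι : Type*}

theorem continuous_ciSup_apply [TopologicalSpace X] [Fintype ι] [Nonempty ι]
    {L : Type*} [ConditionallyCompleteLattice L] [TopologicalSpace L] [ContinuousSup L]
    {f : ι → X → L} (hf : ∀ i, Continuous (f i)) : Continuous fun x => ⨆ i, f i x := by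
  simpa only [Finset.sup'_univ_eq_ciSup] using
    Continuous.finset_sup'_apply Finset.univ_nonempty fun i _ => hf i

theorem exists_measurable_partition_ciSup_eqOn [MeasurableSpace X] [LinearOrder ι]
    [LocallyFiniteOrderBot ι] [Finite ι] [Nonempty ι] {g : ι → X → ℝ}
    (hg : ∀ i, Measurable (g i)) :
    ∃ U : ι → Set X, (∀ i, MeasurableSet (U i)) ∧ Pairwise (Disjoint on U) ∧
      ⋃ i, U i = Set.univ ∧ ∀ i, Set.EqOn (fun x => ⨆ j, g j x) (g i) (U i) := by
  set A : ι → Set X := fun i => {x | ∀ j, g j x ≤ g i x}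
  have hA : ∀ i, MeasurableSet (A i) := fun i => by
    simp only [A, Set.ofPred_forall]
    exact MeasurableSet.iInter fun j => measurableSet_le (hg j) (hg i)
  refine ⟨disjointed A, fun i => disjointedRec (fun _ j ht => ht.diff (hA j)) (hA i),
    disjoint_disjointed A, ?_, ?_⟩
  · rw [iUnion_disjointed, Set.eq_univ_iff_forall]
    intro x
    obtain ⟨i, hi⟩ := Finite.exists_max fun j => g j x
    exact Set.mem_iUnion.2 ⟨i, hi⟩
  · intro i x hx
    exact le_antisymm (ciSup_le (disjointed_subset A i hx))
      (le_ciSup (f := fun j => g j x) (Finite.bddAbove_range _) i)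

variable [MeasurableSpace X] [Fintype ι]

theorem integral_le_integral_sum_measure_of_eqOn {ν : Measure X} {μs : ι → Measure X}
    {f : X → ℝ} {g : ι → X → ℝ} {U : ι → Set X} (hU : ∀ i, MeasurableSet (U i))
    (hdisj : Pairwise (Disjoint on U)) (hcover : ⋃ i, U i = Set.univ)
    (hfν : Integrable f ν) (hfμ : ∀ i, Integrable f (μs i))
    (hgμ : ∀ i, Integrable (g i) (μs i))
    (hgf : ∀ i, g i ≤ f) (hfg : ∀ i, Set.EqOn f (g i) (U i))
    (hμs : ∀ i, ∫ x, g i x ∂μs i = ∫ x in U i, g i x ∂ν) :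
    ∫ x, f x ∂ν ≤ ∫ x, f x ∂(∑ i, μs i) :=
  calc ∫ x, f x ∂ν = ∫ x in ⋃ i, U i, f x ∂ν := by rw [hcover, setIntegral_univ]
    _ = ∑ i, ∫ x in U i, f x ∂ν :=
        integral_iUnion_fintype hU hdisj fun i => hfν.integrableOn
    _ = ∑ i, ∫ x, g i x ∂μs i :=
        Finset.sum_congr rfl fun i _ => (setIntegral_congr_fun (hU i) (hfg i)).trans (hμs i).symm
    _ ≤ ∑ i, ∫ x, f x ∂μs i :=
        Finset.sum_le_sum fun i _ => integral_mono (hgμ i) (hfμ i) (hgf i)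
    _ = ∫ x, f x ∂(∑ i, μs i) := (integral_finsetSum_measure fun i _ => hfμ i).symm

end

theorem linearlyMajorizes_integral_max_le_general {N : ℕ}
    (μ ν : Measure (Metric.sphere (0 : EuclideanSpace ℝ (Fin N)) 1))
    [IsFiniteMeasure ν]
    (h : LinearlyMajorizes N μ ν)
    (m : ℕ) (ℓ : Fin (m + 1) → (EuclideanSpace ℝ (Fin N) →ₗ[ℝ] ℝ)) :
    ∫ x, (⨆ k, ℓ k (x : EuclideanSpace ℝ (Fin N))) ∂ν
      ≤ ∫ x, (⨆ k, ℓ k (x : EuclideanSpace ℝ (Fin N))) ∂μ := by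
  set g : Fin (m + 1) → Metric.sphere (0 : EuclideanSpace ℝ (Fin N)) 1 → ℝ :=
    fun k x => ℓ k x
  have hg : ∀ k, Continuous (g k) := fun k =>
    (ℓ k).continuous_of_finiteDimensional.comp continuous_subtype_val
  have hf : Continuous fun x => ⨆ k, g k x := continuous_ciSup_apply hg
  have integrable {φ : Metric.sphere (0 : EuclideanSpace ℝ (Fin N)) 1 → ℝ}
      (hφ : Continuous φ) (ρ : Measure _) [IsFiniteMeasure ρ] :
      Integrable φ ρ :=
    hφ.integrable_of_hasCompactSupport (HasCompactSupport.of_compactSpace φ)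
  obtain ⟨U, hU, hdisj, hcover, hfg⟩ :=
    exists_measurable_partition_ciSup_eqOn fun k => (hg k).measurable
  obtain ⟨μs, hμs_fin, rfl, hμs⟩ := h (m + 1) U hU hdisj hcover
  exact integral_le_integral_sum_measure_of_eqOn hU hdisj hcover (integrable hf ν)
    (fun k => integrable hf (μs k)) (fun k => integrable (hg k) (μs k))
    (fun k x => le_ciSup (f := fun j => g j x) (Finite.bddAbove_range _) k) hfg
    (fun k => hμs k (ℓ k))

/-- If `μ` linearly majorizes `ν` on the unit sphere, then for any finitely many (at least
one) linear functionals `ℓ 0, …, ℓ m` on `ℝ^N`,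
`∫ max (ℓ 0, …, ℓ m) dμ ≥ ∫ max (ℓ 0, …, ℓ m) dν`. -/
theorem linearlyMajorizes_integral_max_le {N : ℕ}
    (μ ν : Measure (Metric.sphere (0 : EuclideanSpace ℝ (Fin N)) 1))
    [IsFiniteMeasure μ] [IsFiniteMeasure ν]
    (h : LinearlyMajorizes N μ ν)
    (m : ℕ) (ℓ : Fin (m + 1) → (EuclideanSpace ℝ (Fin N) →ₗ[ℝ] ℝ)) :
    ∫ x, (⨆ k, ℓ k (x : EuclideanSpace ℝ (Fin N))) ∂ν
      ≤ ∫ x, (⨆ k, ℓ k (x : EuclideanSpace ℝ (Fin N))) ∂μ :=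
  linearlyMajorizes_integral_max_le_general μ ν h m ℓ
end

section
/- Every sublinear function p : ℝ^N → ℝ is a uniform limit on the unit sphere of pointwise maxima of finite families of linear functionals: for every ε > 0 there exist finitely many linear functionals ℓ_1,…,ℓ_m on ℝ^N such that |p(x) − max_k ℓ_k(x)| ≤ ε for all x in the unit sphere S_{N-1}. -/
/-!
Each point `x₀` of the sphere has, by Hahn–Banach, a linear functional `ℓ ≤ p` with
`ℓ x₀ = p x₀`. Since `p` is continuous, `p - ℓ < ε` on an open neighbourhood of `x₀`, and finitely
many such neighbourhoods cover the compact sphere. The maximum of the corresponding functionals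
lies below `p` everywhere and above `p - ε` on the sphere.
-/

section Sublinear

variable {E : Type*}

theorem mul_le_apply_smul_of_sublinear [AddCommGroup E] [Module ℝ E] {p : E → ℝ}
    (hhom : ∀ t : ℝ, 0 ≤ t → ∀ x, p (t • x) = t * p x) (hadd : ∀ x y, p (x + y) ≤ p x + p y)
    (c : ℝ) (x : E) : c * p x ≤ p (c • x) := by
  rcases le_or_gt 0 c with hc | hc
  · rw [hhom c hc]
  · have hzero : p 0 = 0 := by simpa using hhom 0 le_rfl 0
    have := hadd (c • x) ((-c) • x)
    rw [← add_smul, add_neg_cancel, zero_smul, hzero, hhom (-c) (by linarith)] at this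
    linarith

theorem exists_linearMap_le_eq_of_sublinear [AddCommGroup E] [Module ℝ E] {p : E → ℝ}
    (hhom : ∀ t : ℝ, 0 ≤ t → ∀ x, p (t • x) = t * p x) (hadd : ∀ x y, p (x + y) ≤ p x + p y)
    (x₀ : E) : ∃ g : E →ₗ[ℝ] ℝ, g x₀ = p x₀ ∧ ∀ x, g x ≤ p x := by
  have hwd : ∀ c : ℝ, c • x₀ = 0 → c • p x₀ = 0 := fun c hc => by
    rcases smul_eq_zero.1 hc with rfl | rfl
    · exact zero_smul ℝ _
    · rw [show p 0 = 0 by simpa using hhom 0 le_rfl 0, smul_zero]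
  let f := LinearPMap.mkSpanSingleton' (σ := RingHom.id ℝ) x₀ (p x₀) hwd
  have hf : ∀ z : f.domain, f z ≤ p z := by
    rintro ⟨z, hz⟩
    obtain ⟨c, rfl⟩ := Submodule.mem_span_singleton.1 hz
    rw [LinearPMap.mkSpanSingleton'_apply]
    exact mul_le_apply_smul_of_sublinear hhom hadd c x₀
  obtain ⟨g, hgf, hgp⟩ :=
    exists_extension_of_le_sublinear f p (fun c hc => hhom c hc.le) hadd hf
  refine ⟨g, ?_, hgp⟩
  exact (hgf ⟨x₀, Submodule.mem_span_singleton_self x₀⟩).trans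
    (LinearPMap.mkSpanSingleton'_apply_self _ _ _ _)

theorem continuous_of_sublinear [NormedAddCommGroup E] [NormedSpace ℝ E] [FiniteDimensional ℝ E]
    {p : E → ℝ} (hhom : ∀ t : ℝ, 0 ≤ t → ∀ x, p (t • x) = t * p x)
    (hadd : ∀ x y, p (x + y) ≤ p x + p y) : Continuous p := by
  have hconv : ConvexOn ℝ Set.univ p := by
    refine ⟨convex_univ, fun x _ y _ a b ha hb _ => ?_⟩
    calc p (a • x + b • y) ≤ p (a • x) + p (b • y) := hadd _ _
      _ = a * p x + b * p y := by rw [hhom a ha, hhom b hb]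
  exact continuousOn_univ.1 (hconv.continuousOn isOpen_univ)

end Sublinear

theorem IsCompact.exists_finset_forall_exists_sub_lt {X ι : Type*} [TopologicalSpace X]
    {K : Set X} (hK : IsCompact K) {f : X → ℝ} {g : ι → X → ℝ} (hf : Continuous f)
    (hg : ∀ i, Continuous (g i)) (htouch : ∀ x ∈ K, ∃ i, g i x = f x) {ε : ℝ} (hε : 0 < ε) :
    ∃ t : Finset ι, ∀ x ∈ K, ∃ i ∈ t, f x - ε < g i x := by
  have hopen : ∀ i, IsOpen {x | f x - ε < g i x} := fun i =>
    isOpen_lt (hf.sub continuous_const) (hg i)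
  have hcover : K ⊆ ⋃ i, {x | f x - ε < g i x} := fun x hx => by
    obtain ⟨i, hi⟩ := htouch x hx
    exact Set.mem_iUnion.2 ⟨i, by simp [hi, hε]⟩
  obtain ⟨t, ht⟩ := hK.elim_finite_subcover _ hopen hcover
  exact ⟨t, fun x hx => by simpa using ht hx⟩

theorem abs_sub_iSup_le_of_forall_le {ι : Type*} [Finite ι] [Nonempty ι] {v : ι → ℝ} {a ε : ℝ}
    (hle : ∀ i, v i ≤ a) (hge : ∃ i, a - ε ≤ v i) : |a - ⨆ i, v i| ≤ ε := by
  obtain ⟨i, hi⟩ := hge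
  have hsup_le : ⨆ i, v i ≤ a := ciSup_le hle
  have hle_sup : v i ≤ ⨆ i, v i := le_ciSup (Set.finite_range v).bddAbove i
  rw [abs_le]
  constructor <;> linarith

/-- Every sublinear `p : ℝ^N → ℝ` is a uniform limit on the unit sphere of pointwise
maxima of finite (nonempty) families of linear functionals: for every `ε > 0` there are
finitely many linear functionals `ℓ 0, …, ℓ m` with
`|p x - max (ℓ 0 x, …, ℓ m x)| ≤ ε` for all `x` in the unit sphere. -/
theorem sublinear_uniform_limit_of_max_linear {N : ℕ}
    (p : EuclideanSpace ℝ (Fin N) → ℝ) (hp : Sublinear N p)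
    (ε : ℝ) (hε : 0 < ε) :
    ∃ (m : ℕ) (ℓ : Fin (m + 1) → (EuclideanSpace ℝ (Fin N) →ₗ[ℝ] ℝ)),
      ∀ x ∈ Metric.sphere (0 : EuclideanSpace ℝ (Fin N)) 1,
        |p x - ⨆ k, ℓ k x| ≤ ε := by
  choose L hLeq hLle using exists_linearMap_le_eq_of_sublinear hp.1 hp.2
  obtain ⟨t, ht⟩ := (isCompact_sphere 0 1).exists_finset_forall_exists_sub_lt
    (continuous_of_sublinear hp.1 hp.2) (fun x => (L x).continuous_of_finiteDimensional)
    (fun x _ => ⟨x, hLeq x⟩) hε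
  -- `t` may be empty (e.g. for `N = 0`); `L 0` fills the slot that `Fin (m + 1)` requires.
  refine ⟨t.card, Fin.cons (L 0) fun k => L (t.equivFin.symm k), fun x hx => ?_⟩
  refine abs_sub_iSup_le_of_forall_le (fun k => ?_) ?_
  · cases k using Fin.cases <;> simp [hLle]
  · obtain ⟨y, hy, hxy⟩ := ht x hx
    exact ⟨(t.equivFin ⟨y, hy⟩).succ, by simpa using hxy.le⟩
end

section
/- The linear span of the restrictions to the unit sphere S_{N-1} of support functions of nonempty compact convex subsets of ℝ^N is dense in the Banach space C(S_{N-1}) of continuous real-valued functions on S_{N-1} with the supremum norm; equivalently, every continuous function on S_{N-1} is a uniform limit of differences of restrictions of support functions of convex bodies. -/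
/-!
Support functions turn Minkowski sums and nonnegative dilations of convex bodies into sums and
nonnegative multiples, so the differences `h_K - h_L` form a vector space. It is also a lattice:
the support function of the closed convex hull of `K ∪ L` is `max h_K h_L`, and
`max (h_K₁ - h_L₁) (h_K₂ - h_L₂) = max h_(K₁ + L₂) h_(K₂ + L₁) - h_(L₁ + L₂)`.
On the unit sphere this lattice contains the constant `1 = h_B` (unit ball `B`) and the linear
functions `⟪·, y⟫ = h_{y}`, which separate points, so the lattice version of the
Stone–Weierstrass theorem makes it dense.
-/

open RealInnerProductSpace Set Metric Pointwise

theorem Submodule.separatesPointsStrongly_of_one_mem {α 𝕜 : Type*} [TopologicalSpace α]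
    [Field 𝕜] [TopologicalSpace 𝕜] [IsTopologicalRing 𝕜] {M : Submodule 𝕜 C(α, 𝕜)}
    (h1 : 1 ∈ M) (hsep : ∀ x y : α, x ≠ y → ∃ f ∈ M, f x ≠ f y) :
    (M : Set C(α, 𝕜)).SeparatesPointsStrongly := by
  intro v x y
  rcases eq_or_ne x y with rfl | hxy
  · exact ⟨v x • 1, M.smul_mem _ h1, by simp, by simp⟩
  obtain ⟨f, hf, hfxy⟩ := hsep x y hxy
  have hne : f y - f x ≠ 0 := sub_ne_zero.2 hfxy.symm
  refine ⟨((v y - v x) / (f y - f x)) • (f - f x • 1) + v x • 1,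
    M.add_mem (M.smul_mem _ (M.sub_mem hf (M.smul_mem _ h1))) (M.smul_mem _ h1), by simp, ?_⟩
  simp [div_mul_cancel₀ _ hne]

namespace ConvexBody

variable {E : Type*} [NormedAddCommGroup E] [InnerProductSpace ℝ E]

noncomputable def supportFunction (K : ConvexBody E) : C(E, ℝ) :=
  ⟨fun x => sSup ((fun y => ⟪x, y⟫) '' K), K.isCompact.continuous_sSup continuous_inner⟩

variable (K L : ConvexBody E) (x : E)

theorem isGreatest_supportFunction :
    IsGreatest ((fun y => ⟪x, y⟫) '' K) (K.supportFunction x) :=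
  (K.isCompact.image (continuous_const.inner continuous_id)).isGreatest_sSup
    (K.nonempty.image _)

theorem exists_inner_eq_supportFunction : ∃ y ∈ K, ⟪x, y⟫ = K.supportFunction x :=
  (K.isGreatest_supportFunction x).1

variable {K x}

theorem inner_le_supportFunction {y : E} (hy : y ∈ K) : ⟪x, y⟫ ≤ K.supportFunction x :=
  (K.isGreatest_supportFunction x).2 ⟨y, hy, rfl⟩

theorem supportFunction_eq_of_forall_le {m : ℝ} (hle : ∀ y ∈ K, ⟪x, y⟫ ≤ m)
    (hm : ∃ y ∈ K, ⟪x, y⟫ = m) : K.supportFunction x = m :=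
  IsGreatest.csSup_eq ⟨hm.imp fun _ ↦ id, by rintro _ ⟨y, hy, rfl⟩; exact hle y hy⟩

variable (K x)

theorem supportFunction_add :
    (K + L).supportFunction x = K.supportFunction x + L.supportFunction x := by
  obtain ⟨a, ha, ha'⟩ := K.exists_inner_eq_supportFunction x
  obtain ⟨b, hb, hb'⟩ := L.exists_inner_eq_supportFunction x
  refine supportFunction_eq_of_forall_le ?_ ⟨a + b, add_mem_add ha hb, by
    rw [inner_add_right, ha', hb']⟩
  rintro _ ⟨a, ha, b, hb, rfl⟩
  rw [inner_add_right]
  exact add_le_add (inner_le_supportFunction ha) (inner_le_supportFunction hb)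

theorem supportFunction_smul {c : ℝ} (hc : 0 ≤ c) :
    (c • K).supportFunction x = c * K.supportFunction x := by
  obtain ⟨a, ha, ha'⟩ := K.exists_inner_eq_supportFunction x
  refine supportFunction_eq_of_forall_le ?_ ⟨c • a, smul_mem_smul_set ha, by
    rw [real_inner_smul_right, ha']⟩
  rintro _ ⟨a, ha, rfl⟩
  rw [real_inner_smul_right]
  exact mul_le_mul_of_nonneg_left (inner_le_supportFunction ha) hc

theorem supportFunction_zero : (0 : ConvexBody E).supportFunction x = 0 :=
  supportFunction_eq_of_forall_le (fun y hy => by rw [mem_zero.1 hy, inner_zero_right])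
    ⟨0, zero_mem_zero, inner_zero_right x⟩

def singleton (y : E) : ConvexBody E :=
  ⟨{y}, convex_singleton y, isCompact_singleton, singleton_nonempty y⟩

theorem supportFunction_singleton (y : E) : (singleton y).supportFunction x = ⟪x, y⟫ :=
  supportFunction_eq_of_forall_le (fun z hz => by rw [show z = y from hz])
    ⟨y, rfl, rfl⟩

section ProperSpace

variable [ProperSpace E]

def closedUnitBall : ConvexBody E :=
  ⟨closedBall 0 1, convex_closedBall 0 1, isCompact_closedBall 0 1,
    nonempty_closedBall.2 zero_le_one⟩

theorem supportFunction_closedUnitBall : closedUnitBall.supportFunction x = ‖x‖ := by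
  refine supportFunction_eq_of_forall_le (fun y hy => ?_) ?_
  · calc ⟪x, y⟫ ≤ ‖x‖ * ‖y‖ := real_inner_le_norm x y
      _ ≤ ‖x‖ * 1 := mul_le_mul_of_nonneg_left (mem_closedBall_zero_iff.1 hy) (norm_nonneg x)
      _ = ‖x‖ := mul_one _
  · rcases eq_or_ne x 0 with rfl | hx
    · exact ⟨0, mem_closedBall_self zero_le_one, by simp⟩
    · refine ⟨‖x‖⁻¹ • x, mem_closedBall_zero_iff.2 (norm_smul_inv_norm hx).le, ?_⟩
      rw [real_inner_smul_right, real_inner_self_eq_norm_sq]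
      field_simp

def closedConvexHullUnion : ConvexBody E where
  carrier := closedConvexHull ℝ (K ∪ L : Set E)
  convex' := convex_closedConvexHull
  isCompact' := by
    rw [closedConvexHull_eq_closure_convexHull]
    exact (isBounded_convexHull.2 (K.isBounded.union L.isBounded)).isCompact_closure
  nonempty' := K.nonempty.mono (subset_union_left.trans subset_closedConvexHull)

theorem supportFunction_closedConvexHullUnion :
    (closedConvexHullUnion K L).supportFunction x =
      max (K.supportFunction x) (L.supportFunction x) := by
  refine supportFunction_eq_of_forall_le (fun y hy => ?_) ?_
  · have hhalf : closedConvexHull ℝ (K ∪ L : Set E) ⊆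
        {y | ⟪x, y⟫ ≤ max (K.supportFunction x) (L.supportFunction x)} := by
      refine closedConvexHull_min ?_ (convex_halfSpace_le (innerₛₗ ℝ x).isLinear _)
        (isClosed_le (continuous_const.inner continuous_id) continuous_const)
      rintro y (hy | hy)
      · exact (inner_le_supportFunction hy).trans (le_max_left _ _)
      · exact (inner_le_supportFunction hy).trans (le_max_right _ _)
    exact hhalf hy
  · have hsub : (K ∪ L : Set E) ⊆ closedConvexHullUnion K L := subset_closedConvexHull
    rcases le_total (K.supportFunction x) (L.supportFunction x) with h | h
    · obtain ⟨y, hy, hy'⟩ := L.exists_inner_eq_supportFunction x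
      exact ⟨y, hsub (Or.inr hy), by rw [hy', max_eq_right h]⟩
    · obtain ⟨y, hy, hy'⟩ := K.exists_inner_eq_supportFunction x
      exact ⟨y, hsub (Or.inl hy), by rw [hy', max_eq_left h]⟩

end ProperSpace

def supportFunctionDifferences (s : Set E) : Submodule ℝ C(s, ℝ) where
  carrier := {g | ∃ K L : ConvexBody E,
    ∀ x : s, g x = K.supportFunction x - L.supportFunction x}
  zero_mem' := ⟨0, 0, fun x => by rw [ContinuousMap.zero_apply, sub_self]⟩
  add_mem' := by
    rintro f g ⟨K₁, L₁, hf⟩ ⟨K₂, L₂, hg⟩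
    refine ⟨K₁ + K₂, L₁ + L₂, fun x => ?_⟩
    rw [ContinuousMap.add_apply, hf, hg, supportFunction_add, supportFunction_add]
    ring
  smul_mem' := by
    rintro c g ⟨K, L, hg⟩
    rcases le_total 0 c with hc | hc
    · refine ⟨c • K, c • L, fun x => ?_⟩
      rw [ContinuousMap.smul_apply, hg, supportFunction_smul _ _ hc, supportFunction_smul _ _ hc,
        smul_eq_mul]
      ring
    · refine ⟨(-c) • L, (-c) • K, fun x => ?_⟩
      rw [ContinuousMap.smul_apply, hg, supportFunction_smul _ _ (neg_nonneg.2 hc),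
        supportFunction_smul _ _ (neg_nonneg.2 hc), smul_eq_mul]
      ring

variable {s : Set E}

theorem restrict_supportFunction_mem_supportFunctionDifferences :
    K.supportFunction.restrict s ∈ supportFunctionDifferences s :=
  ⟨K, 0, fun x => by rw [ContinuousMap.restrict_apply, supportFunction_zero, sub_zero]⟩

theorem exists_mem_supportFunctionDifferences_ne {x y : s} (hxy : x ≠ y) :
    ∃ f ∈ supportFunctionDifferences s, f x ≠ f y := by
  refine ⟨(singleton ((x : E) - y)).supportFunction.restrict s,
    restrict_supportFunction_mem_supportFunctionDifferences _, fun h => hxy ?_⟩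
  simp only [ContinuousMap.restrict_apply, supportFunction_singleton] at h
  rw [← sub_eq_zero, ← inner_sub_left, real_inner_self_eq_norm_sq, sq_eq_zero_iff, norm_eq_zero,
    sub_eq_zero] at h
  exact Subtype.ext h

theorem sup_mem_supportFunctionDifferences [ProperSpace E] {f g : C(s, ℝ)}
    (hf : f ∈ supportFunctionDifferences s) (hg : g ∈ supportFunctionDifferences s) :
    f ⊔ g ∈ supportFunctionDifferences s := by
  obtain ⟨K₁, L₁, hf⟩ := hf
  obtain ⟨K₂, L₂, hg⟩ := hg
  refine ⟨closedConvexHullUnion (K₁ + L₂) (K₂ + L₁), L₁ + L₂, fun x => ?_⟩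
  rw [ContinuousMap.sup_apply, hf, hg, supportFunction_closedConvexHullUnion,
    supportFunction_add, supportFunction_add, supportFunction_add, ← max_sub_sub_right]
  congr 1 <;> ring

theorem one_mem_supportFunctionDifferences_sphere [ProperSpace E] :
    (1 : C(sphere (0 : E) 1, ℝ)) ∈ supportFunctionDifferences (sphere (0 : E) 1) :=
  ⟨closedUnitBall, 0, fun x => by
    rw [ContinuousMap.one_apply, supportFunction_closedUnitBall, supportFunction_zero, sub_zero,
      norm_eq_of_mem_sphere]⟩

theorem dense_supportFunctionDifferences_sphere [FiniteDimensional ℝ E] :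
    Dense (supportFunctionDifferences (sphere (0 : E) 1) : Set C(sphere (0 : E) 1, ℝ)) := by
  set D := supportFunctionDifferences (sphere (0 : E) 1)
  have sup_mem : ∀ f ∈ D, ∀ g ∈ D, f ⊔ g ∈ D := fun f hf g hg =>
    sup_mem_supportFunctionDifferences hf hg
  have inf_mem : ∀ f ∈ D, ∀ g ∈ D, f ⊓ g ∈ D := fun f hf g hg => by
    rw [← neg_neg (f ⊓ g), neg_inf]
    exact D.neg_mem (sup_mem _ (D.neg_mem hf) _ (D.neg_mem hg))
  rw [dense_iff_closure_eq]
  exact ContinuousMap.sublattice_closure_eq_top _ ⟨0, D.zero_mem⟩ inf_mem sup_mem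
    (Submodule.separatesPointsStrongly_of_one_mem one_mem_supportFunctionDifferences_sphere
      fun _ _ => exists_mem_supportFunctionDifferences_ne)

theorem supportFunctionDifferences_le_span (s : Set E) :
    supportFunctionDifferences s ≤ Submodule.span ℝ {g : C(s, ℝ) | ∃ K : Set E,
      K.Nonempty ∧ IsCompact K ∧ Convex ℝ K ∧
        ∀ x : s, g x = sSup ((fun y => ⟪(x : E), y⟫) '' K)} := by
  rintro g ⟨K, L, hg⟩
  have : g = K.supportFunction.restrict s - L.supportFunction.restrict s := by
    ext x
    exact hg x
  exact this ▸
    sub_mem (Submodule.subset_span ⟨K, K.nonempty, K.isCompact, K.convex, fun _ => rfl⟩)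
    (Submodule.subset_span ⟨L, L.nonempty, L.isCompact, L.convex, fun _ => rfl⟩)

end ConvexBody

open ConvexBody in
/-- The linear span of the restrictions to the unit sphere `S_{N-1}` of support functions
of nonempty compact convex subsets of `ℝ^N` is dense in `C(S_{N-1})`; equivalently, every
continuous function on the sphere is a uniform limit of differences of restrictions of
support functions of convex bodies. -/
theorem span_supportFunctions_dense {N : ℕ} :
    Dense (↑(Submodule.span ℝ
      {g : C(Metric.sphere (0 : EuclideanSpace ℝ (Fin N)) 1, ℝ) |
        ∃ K : Set (EuclideanSpace ℝ (Fin N)),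
          K.Nonempty ∧ IsCompact K ∧ Convex ℝ K ∧
          ∀ x : Metric.sphere (0 : EuclideanSpace ℝ (Fin N)) 1,
            g x = sSup ((fun y => ⟪(x : EuclideanSpace ℝ (Fin N)), y⟫) '' K)}) :
      Set C(Metric.sphere (0 : EuclideanSpace ℝ (Fin N)) 1, ℝ)) ∧
    ∀ f : Metric.sphere (0 : EuclideanSpace ℝ (Fin N)) 1 → ℝ, Continuous f →
      ∀ ε : ℝ, 0 < ε →
        ∃ K L : Set (EuclideanSpace ℝ (Fin N)),
          K.Nonempty ∧ IsCompact K ∧ Convex ℝ K ∧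
          L.Nonempty ∧ IsCompact L ∧ Convex ℝ L ∧
          ∀ x : Metric.sphere (0 : EuclideanSpace ℝ (Fin N)) 1,
            |f x - (sSup ((fun y => ⟪(x : EuclideanSpace ℝ (Fin N)), y⟫) '' K)
                  - sSup ((fun y => ⟪(x : EuclideanSpace ℝ (Fin N)), y⟫) '' L))| ≤ ε := by
  have hD := dense_supportFunctionDifferences_sphere (E := EuclideanSpace ℝ (Fin N))
  refine ⟨hD.mono (supportFunctionDifferences_le_span _), fun f hf ε hε => ?_⟩
  obtain ⟨g, hfg, K, L, hg⟩ := Metric.dense_iff.1 hD ⟨f, hf⟩ ε hε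
  refine ⟨K, L, K.nonempty, K.isCompact, K.convex, L.nonempty, L.isCompact, L.convex,
    fun x => ?_⟩
  calc |f x - (K.supportFunction x - L.supportFunction x)|
        = dist (g x) (f x) := by rw [← hg, Real.dist_eq, abs_sub_comm]
    _ ≤ ε := ((ContinuousMap.dist_apply_le_dist x).trans_lt hfg).le
end

section
/- Let X be a real inner product space, let K ⊆ X be a convex cone containing 0, and let x̄ ∈ K. Then the dual cone of the cone of feasible directions Fd(K, x̄) = {h ∈ X : ∃ α ≥ 0, x̄ + α h ∈ K} equals the intersection of the dual cone of K with the hyperplane orthogonal to x̄: {y ∈ X : ⟨h, y⟩ ≥ 0 for all h ∈ Fd(K, x̄)} = {y ∈ X : ⟨k, y⟩ ≥ 0 for all k ∈ K, and ⟨x̄, y⟩ = 0}. -/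
open RealInnerProductSpace

/-!
`y` is nonnegative on the feasible directions at `x̄` iff `x̄` minimises `⟪·, y⟫` over `K`
(test `h = k - x̄` with `α = 1`). As the cone `K` contains `0` and `2 x̄`, that minimum `⟪x̄, y⟫`
is both `≤ 0` and `≥ 0`, and a minimum value `0` means exactly that `y` lies in the dual cone
of `K`.
-/

section FeasibleDirections

variable {X : Type*} [AddCommGroup X] [Module ℝ X]

def feasibleDirections (K : Set X) (x : X) : Set X :=
  {h | ∃ α : ℝ, 0 < α ∧ x + α • h ∈ K} ∪ {0}

lemma sub_mem_feasibleDirections {K : Set X} {x k : X} (hk : k ∈ K) :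
    k - x ∈ feasibleDirections K x :=
  .inl ⟨1, one_pos, by simpa using hk⟩

end FeasibleDirections

section InnerProductSpace

variable {X : Type*} [NormedAddCommGroup X] [InnerProductSpace ℝ X]

lemma forall_inner_nonneg_feasibleDirections_iff_isMinOn {K : Set X} {x y : X} :
    (∀ h ∈ feasibleDirections K x, 0 ≤ ⟪h, y⟫) ↔ IsMinOn (⟪·, y⟫) K x := by
  rw [isMinOn_iff]
  constructor
  · intro hy k hk
    have := hy _ (sub_mem_feasibleDirections hk)
    rw [inner_sub_left] at this
    linarith
  · rintro hmin h (⟨α, hα, hmem⟩ | rfl)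
    · have := hmin _ hmem
      rw [inner_add_left, real_inner_smul_left] at this
      exact nonneg_of_mul_nonneg_right (by linarith) hα
    · simp

lemma isMinOn_inner_iff_of_smul_mem {K : Set X} (hK : ∀ c : ℝ, 0 ≤ c → ∀ x ∈ K, c • x ∈ K)
    {x y : X} (hx : x ∈ K) :
    IsMinOn (⟪·, y⟫) K x ↔ (∀ k ∈ K, 0 ≤ ⟪k, y⟫) ∧ ⟪x, y⟫ = 0 := by
  rw [isMinOn_iff]
  constructor
  · intro hmin
    have h_nonpos : ⟪x, y⟫ ≤ 0 := by simpa using hmin _ (hK 0 le_rfl x hx)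
    have h_nonneg : 0 ≤ ⟪x, y⟫ := by
      have := hmin _ (hK 2 zero_le_two x hx)
      rw [real_inner_smul_left] at this
      linarith
    have h_zero : ⟪x, y⟫ = 0 := le_antisymm h_nonpos h_nonneg
    exact ⟨fun k hk => h_zero ▸ hmin k hk, h_zero⟩
  · rintro ⟨hdual, h_zero⟩ k hk
    exact h_zero ▸ hdual k hk

end InnerProductSpace

theorem dualCone_feasibleDirections_general
    {X : Type*} [NormedAddCommGroup X] [InnerProductSpace ℝ X]
    (K : Set X)
    (hKsmul : ∀ c : ℝ, 0 ≤ c → ∀ x ∈ K, c • x ∈ K)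
    (xbar : X) (hxbar : xbar ∈ K) :
    {y : X | ∀ h ∈ ({h : X | ∃ α : ℝ, 0 < α ∧ xbar + α • h ∈ K} ∪ {0} : Set X),
        0 ≤ ⟪h, y⟫}
      = {y : X | (∀ k ∈ K, 0 ≤ ⟪k, y⟫) ∧ ⟪xbar, y⟫ = 0} := by
  ext y
  exact forall_inner_nonneg_feasibleDirections_iff_isMinOn.trans
    (isMinOn_inner_iff_of_smul_mem hKsmul hxbar)

/-- Let `X` be a real inner product space, `K ⊆ X` a convex cone containing `0`, and
`xbar ∈ K`.  The dual cone of the cone of feasible directions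
`Fd(K, xbar) = {h : ∃ α > 0, xbar + α • h ∈ K} ∪ {0}` equals the intersection of the dual cone
of `K` with the hyperplane orthogonal to `xbar`. -/
theorem dualCone_feasibleDirections
    {X : Type*} [NormedAddCommGroup X] [InnerProductSpace ℝ X]
    (K : Set X) (hKconv : Convex ℝ K) (h0 : 0 ∈ K)
    (hKsmul : ∀ c : ℝ, 0 ≤ c → ∀ x ∈ K, c • x ∈ K)
    (xbar : X) (hxbar : xbar ∈ K) :
    {y : X | ∀ h ∈ ({h : X | ∃ α : ℝ, 0 < α ∧ xbar + α • h ∈ K} ∪ {0} : Set X),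
        0 ≤ ⟪h, y⟫}
      = {y : X | (∀ k ∈ K, 0 ≤ ⟪k, y⟫) ∧ ⟪xbar, y⟫ = 0} :=
  dualCone_feasibleDirections_general K hKsmul xbar hxbar
end
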